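/- arXiv:2002.08730 — 8 statements merged into one kernel-verified Lean document; each statement's English description precedes it below -/
import Mathlib

section
/- Let C be a convex pregeometry on a set G. Then C satisfies the anti-exchange axiom (for all C ∈ C and y,z ∉ C with y ≠ z: y ∈ τ(C ∪ {z}) implies z ∉ τ(C ∪ {y})) if and only if C has the corner addition property (for all C, D ∈ C with C ⊊ D, there exists a ∈ D \ C with C ∪ {a} ∈ C). -/
attribute [local instance] Classical.propDecidable

/-- The closure of a finite set `B`: intersection of all members of `𝒞` containing `B`. -/
def memClosure {G : Type*} (𝒞 : Set (Finset G)) (B : Finset G) : Set G :=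
  {x | ∀ C ∈ 𝒞, B ⊆ C → x ∈ C}

lemma memClosure_mono {G : Type*} (𝒞 : Set (Finset G)) {B B' : Finset G} (h : B ⊆ B') :
    memClosure 𝒞 B ⊆ memClosure 𝒞 B' := fun x hx C hC hBC => hx C hC (h.trans hBC)

lemma subset_memClosure {G : Type*} (𝒞 : Set (Finset G)) (B : Finset G) :
    (↑B : Set G) ⊆ memClosure 𝒞 B := fun x hx C _ hBC => hBC hx

lemma closure_exists {G : Type*} (𝒞 : Set (Finset G))
    (hcontain : ∀ B : Finset G, ∃ C ∈ 𝒞, B ⊆ C)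
    (hinter : ∀ C ∈ 𝒞, ∀ D ∈ 𝒞, C ∩ D ∈ 𝒞) (B : Finset G) :
    ∃ E, E ∈ 𝒞 ∧ B ⊆ E ∧ (↑E : Set G) = memClosure 𝒞 B := by
  have hP : ∃ k, ∃ E, E ∈ 𝒞 ∧ B ⊆ E ∧ E.card = k := by
    obtain ⟨C, hC, hBC⟩ := hcontain B
    exact ⟨C.card, C, hC, hBC, rfl⟩
  obtain ⟨E, hE, hBE, hcard⟩ := Nat.find_spec hP
  refine ⟨E, hE, hBE, ?_⟩
  ext x
  simp only [Finset.mem_coe, memClosure, Set.mem_setOf_eq]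
  constructor
  · intro hx D hD hBD
    by_contra hxD
    have h1 : E ∩ D ∈ 𝒞 := hinter E hE D hD
    have h2 : B ⊆ E ∩ D := Finset.subset_inter hBE hBD
    have h3 : (E ∩ D).card < E.card := by
      apply Finset.card_lt_card
      refine ⟨Finset.inter_subset_left, fun hsub => hxD ?_⟩
      exact Finset.mem_of_mem_inter_right (hsub hx)
    rw [hcard] at h3
    exact Nat.find_min hP h3 ⟨E ∩ D, h1, h2, rfl⟩
  · intro hx
    exact hx E hE hBE

lemma corner_to_anti {G : Type*} (𝒞 : Set (Finset G))
    (hcontain : ∀ B : Finset G, ∃ C ∈ 𝒞, B ⊆ C)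
    (hinter : ∀ C ∈ 𝒞, ∀ D ∈ 𝒞, C ∩ D ∈ 𝒞)
    (hcorner : ∀ C ∈ 𝒞, ∀ D ∈ 𝒞, C ⊂ D → ∃ a ∈ D, a ∉ C ∧ insert a C ∈ 𝒞) :
    ∀ n : ℕ, ∀ C : Finset G, C ∈ 𝒞 → ∀ y z : G, y ∉ C → z ∉ C → y ≠ z →
      y ∈ memClosure 𝒞 (insert z C) → z ∈ memClosure 𝒞 (insert y C) →
      ∀ E, E ∈ 𝒞 → insert y C ⊆ E → (↑E : Set G) = memClosure 𝒞 (insert y C) →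
      (E \ C).card < n → False := by
  intro n
  induction n with
  | zero =>
    intro C _ y z _ _ _ _ _ E _ _ _ h
    exact absurd h (Nat.not_lt_zero _)
  | succ n ih =>
    intro C hC y z hyC hzC hyz hyτ hzτ E hE hsubE hEτ hcardE
    have hCE : C ⊂ E := by
      refine ⟨fun x hx => hsubE (Finset.mem_insert_of_mem hx), fun hsub => ?_⟩
      exact hyC (hsub (hsubE (Finset.mem_insert_self y C)))
    obtain ⟨a, haE, haC, hC'⟩ := hcorner C hC E hE hCE
    by_cases hay : a = y
    · subst hay
      have : z ∈ insert a C := hzτ (insert a C) hC' (Finset.Subset.refl _)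
      rcases Finset.mem_insert.mp this with h | h
      · exact hyz h.symm
      · exact hzC h
    by_cases haz : a = z
    · subst haz
      have : y ∈ insert a C := hyτ (insert a C) hC' (Finset.Subset.refl _)
      rcases Finset.mem_insert.mp this with h | h
      · exact hyz h
      · exact hyC h
    -- a ≠ y, a ≠ z : grow C to C' = insert a C
    obtain ⟨E', hE', hsubE', hE'τ⟩ := closure_exists 𝒞 hcontain hinter (insert y (insert a C))
    have hyC' : y ∉ insert a C := by
      simp only [Finset.mem_insert]
      push_neg
      exact ⟨fun h => hay h.symm, hyC⟩
    have hzC' : z ∉ insert a C := by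
      simp only [Finset.mem_insert]
      push_neg
      exact ⟨fun h => haz h.symm, hzC⟩
    have hyτ' : y ∈ memClosure 𝒞 (insert z (insert a C)) := by
      refine memClosure_mono 𝒞 ?_ hyτ
      intro x hx
      rcases Finset.mem_insert.mp hx with h | h
      · exact h ▸ Finset.mem_insert_self _ _
      · exact Finset.mem_insert_of_mem (Finset.mem_insert_of_mem h)
    have hzτ' : z ∈ memClosure 𝒞 (insert y (insert a C)) := by
      refine memClosure_mono 𝒞 ?_ hzτ
      intro x hx
      rcases Finset.mem_insert.mp hx with h | h
      · exact h ▸ Finset.mem_insert_self _ _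
      · exact Finset.mem_insert_of_mem (Finset.mem_insert_of_mem h)
    have hE'E : E' ⊆ E := by
      intro x hx
      have hx' : x ∈ memClosure 𝒞 (insert y (insert a C)) := by
        rw [← hE'τ]; exact hx
      refine hx' E hE ?_
      intro w hw
      rcases Finset.mem_insert.mp hw with h | h
      · exact h ▸ hsubE (Finset.mem_insert_self y C)
      · rcases Finset.mem_insert.mp h with h' | h'
        · exact h' ▸ haE
        · exact hsubE (Finset.mem_insert_of_mem h')
    have hssub : E' \ insert a C ⊂ E \ C := by
      constructor
      · intro x hx
        rcases Finset.mem_sdiff.mp hx with ⟨hx1, hx2⟩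
        refine Finset.mem_sdiff.mpr ⟨hE'E hx1, fun hxC => hx2 (Finset.mem_insert_of_mem hxC)⟩
      · intro hsub
        have haE' : a ∈ E \ C := Finset.mem_sdiff.mpr ⟨haE, haC⟩
        have := hsub haE'
        exact (Finset.mem_sdiff.mp this).2 (Finset.mem_insert_self a C)
    have hcard' : (E' \ insert a C).card < n := by
      have := Finset.card_lt_card hssub
      omega
    exact ih (insert a C) hC' y z hyC' hzC' hyz hyτ' hzτ' E' hE' hsubE' hE'τ hcard'

/-- For a convex pregeometry, the anti-exchange axiom holds iff the corner addition
property holds. -/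
theorem stmt1 {G : Type*} (𝒞 : Set (Finset G))
    (hempty : (∅ : Finset G) ∈ 𝒞)
    (hcontain : ∀ B : Finset G, ∃ C ∈ 𝒞, B ⊆ C)
    (hinter : ∀ C ∈ 𝒞, ∀ D ∈ 𝒞, C ∩ D ∈ 𝒞) :
    (∀ C ∈ 𝒞, ∀ y z : G, y ∉ C → z ∉ C → y ≠ z →
        y ∈ memClosure 𝒞 (insert z C) → z ∉ memClosure 𝒞 (insert y C)) ↔
      (∀ C ∈ 𝒞, ∀ D ∈ 𝒞, C ⊂ D → ∃ a ∈ D, a ∉ C ∧ insert a C ∈ 𝒞) := by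
  constructor
  · -- anti-exchange ⇒ corner addition
    intro hae C hC D hD hCD
    have hne : (D \ C).Nonempty := by
      obtain ⟨x, hxD, hxC⟩ := Finset.exists_of_ssubset hCD
      exact ⟨x, Finset.mem_sdiff.mpr ⟨hxD, hxC⟩⟩
    set f : G → ℕ := fun a =>
      (Classical.choose (closure_exists 𝒞 hcontain hinter (insert a C))).card with hf
    obtain ⟨a, haDC, hmin⟩ := Finset.exists_min_image (D \ C) f hne
    obtain ⟨haD, haC⟩ := Finset.mem_sdiff.mp haDC
    obtain ⟨hEa𝒞, hEasub, hEaτ⟩ :=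
      Classical.choose_spec (closure_exists 𝒞 hcontain hinter (insert a C))
    set Ea := Classical.choose (closure_exists 𝒞 hcontain hinter (insert a C)) with hEa
    have hEaD : Ea ⊆ D := by
      intro x hx
      have hx' : x ∈ memClosure 𝒞 (insert a C) := by rw [← hEaτ]; exact hx
      refine hx' D hD ?_
      intro w hw
      rcases Finset.mem_insert.mp hw with h | h
      · exact h ▸ haD
      · exact hCD.1 h
    have key : Ea = insert a C := by
      apply Finset.Subset.antisymm _ hEasub
      intro b hbEa
      by_contra hb
      have hbC : b ∉ C := fun h => hb (Finset.mem_insert_of_mem h)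
      have hba : b ≠ a := fun h => hb (h ▸ Finset.mem_insert_self a C)
      have hbτ : b ∈ memClosure 𝒞 (insert a C) := by rw [← hEaτ]; exact hbEa
      have hanot : a ∉ memClosure 𝒞 (insert b C) := hae C hC b a hbC haC hba hbτ
      obtain ⟨hEb𝒞, hEbsub, hEbτ⟩ :=
        Classical.choose_spec (closure_exists 𝒞 hcontain hinter (insert b C))
      set Eb := Classical.choose (closure_exists 𝒞 hcontain hinter (insert b C)) with hEb
      have hEbEa : Eb ⊂ Ea := by
        constructor
        · intro x hx
          have hx' : x ∈ memClosure 𝒞 (insert b C) := by rw [← hEbτ]; exact hx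
          refine hx' Ea hEa𝒞 ?_
          intro w hw
          rcases Finset.mem_insert.mp hw with h | h
          · exact h ▸ hbEa
          · exact hEasub (Finset.mem_insert_of_mem h)
        · intro hsub
          refine hanot ?_
          have : a ∈ Eb := hsub (hEasub (Finset.mem_insert_self a C))
          rw [← hEbτ]
          exact this
      have hbDC : b ∈ D \ C := Finset.mem_sdiff.mpr ⟨hEaD hbEa, hbC⟩
      have := hmin b hbDC
      have hlt : f b < f a := Finset.card_lt_card hEbEa
      omega
    refine ⟨a, haD, haC, ?_⟩
    rw [← key]
    exact hEa𝒞
  · -- corner addition ⇒ anti-exchange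
    intro hcorner C hC y z hyC hzC hyz hyτ hzτ
    obtain ⟨E, hE, hEsub, hEτ⟩ := closure_exists 𝒞 hcontain hinter (insert y C)
    exact corner_to_anti 𝒞 hcontain hinter hcorner ((E \ C).card + 1) C hC y z hyC hzC hyz
      hyτ hzτ E hE hEsub hEτ (Nat.lt_succ_self _)
end

section
/- Let G be a group, S a finite subset, and C a convexoid on G. If C has weak T-unique corner positioning for all subsets T ⊆ S (for every C ∈ C and every corner a of C, i.e., a with C \ {a} ∈ C, there is at most one g with a ∈ gT ⊆ C), then C is S⁻¹S-midpointed. -/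
open Pointwise

attribute [local instance] Classical.propDecidable

/-- A convexoid: `∅` is a member, every finite set is contained in some member, and the
corner addition property holds. -/
def IsConvexoid {G : Type*} (𝒞 : Set (Finset G)) : Prop :=
  (∅ : Finset G) ∈ 𝒞 ∧ (∀ B : Finset G, ∃ C ∈ 𝒞, B ⊆ C) ∧
    ∀ C ∈ 𝒞, ∀ D ∈ 𝒞, C ⊂ D → ∃ a ∈ D, a ∉ C ∧ insert a C ∈ 𝒞

lemma stmt7_aux {G : Type*} (𝒞 : Set (Finset G)) (hconv : IsConvexoid 𝒞)
    (D : Finset G) (hD : D ∈ 𝒞) (g : G) (hg : g ∈ D) :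
    ∀ n (C : Finset G), (D \ C).card ≤ n → C ∈ 𝒞 → C ⊆ D → g ∉ C →
      ∃ C' ∈ 𝒞, C ⊆ C' ∧ g ∉ C' ∧ insert g C' ∈ 𝒞 := by
  intro n
  induction n with
  | zero =>
    intro C hcard hC hCD hgC
    exfalso
    have h0 := Finset.card_eq_zero.mp (Nat.le_zero.mp hcard)
    exact (Finset.notMem_empty g) (h0 ▸ Finset.mem_sdiff.mpr ⟨hg, hgC⟩)
  | succ n ih =>
    intro C hcard hC hCD hgC
    have hssub : C ⊂ D := ⟨hCD, fun hDC => hgC (hDC hg)⟩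
    obtain ⟨a, haD, haC, hins⟩ := hconv.2.2 C hC D hD hssub
    by_cases hag : a = g
    · exact ⟨C, hC, Finset.Subset.refl _, hgC, hag ▸ hins⟩
    · have hsub' : insert a C ⊆ D := Finset.insert_subset haD hCD
      have hcard' : (D \ insert a C).card ≤ n := by
        have h1 : D \ insert a C ⊂ D \ C := by
          apply Finset.ssubset_iff_of_subset (Finset.sdiff_subset_sdiff (le_refl D)
            (Finset.subset_insert a C)) |>.mpr
          exact ⟨a, Finset.mem_sdiff.mpr ⟨haD, haC⟩, by simp⟩
        have := Finset.card_lt_card h1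
        omega
      obtain ⟨C', hC', hsub'', hgC', hE⟩ := ih (insert a C) hcard' hins hsub'
        (by simp only [Finset.mem_insert]; push_neg; exact ⟨fun h => hag h.symm, hgC⟩)
      exact ⟨C', hC', (Finset.subset_insert a C).trans hsub'', hgC', hE⟩

/-- If a convexoid has weak `T`-unique corner positioning for every `T ⊆ S` (each corner
of a convex set is covered by at most one translate of `T` inside the set), then it is
`S⁻¹S`-midpointed. -/
theorem stmt7 {G : Type*} [Group G] (S : Finset G) (𝒞 : Set (Finset G))
    (hconv : IsConvexoid 𝒞)
    (hweak : ∀ T : Finset G, T ⊆ S → ∀ C ∈ 𝒞, ∀ a ∈ C, C.erase a ∈ 𝒞 →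
      ∀ g₁ g₂ : G, a ∈ g₁ • T → g₁ • T ⊆ C → a ∈ g₂ • T → g₂ • T ⊆ C → g₁ = g₂) :
    ∀ g : G, ∀ h ∈ S⁻¹ * S, g ∈ memClosure 𝒞 {g * h, g * h⁻¹} := by
  intro g h hh C hC hBC
  obtain ⟨x, hx, v, hv, hxv⟩ := Finset.mem_mul.mp hh
  set u := x⁻¹ with hu
  have huS : u ∈ S := by rwa [Finset.mem_inv'] at hx
  have hhuv : h = u⁻¹ * v := by rw [hu, inv_inv]; exact hxv.symm
  by_contra hgC
  -- gh and gh⁻¹ are in C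
  have hgh : g * h ∈ C := hBC (by simp)
  have hghi : g * h⁻¹ ∈ C := hBC (by simp)
  -- get C'
  obtain ⟨D, hD, hCD⟩ := hconv.2.1 (insert g C)
  have hgD : g ∈ D := hCD (Finset.mem_insert_self g C)
  obtain ⟨C', hC', hCC', hgC', hE⟩ := stmt7_aux 𝒞 hconv D hD g hgD (D \ C).card C le_rfl hC
    ((Finset.subset_insert g C).trans hCD) hgC
  set T : Finset G := {u, v} with hT
  have hTS : T ⊆ S := by
    intro t ht
    rcases Finset.mem_insert.mp ht with h1 | h1
    · exact h1 ▸ huS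
    · exact (Finset.mem_singleton.mp h1) ▸ hv
  set E := insert g C' with hEdef
  have hErase : E.erase g = C' := Finset.erase_insert hgC'
  have hsmul : ∀ w : G, w • T = ({w * u, w * v} : Finset G) := by
    intro w
    simp [hT, Finset.smul_finset_insert, Finset.smul_finset_singleton, smul_eq_mul]
  have h1mem : g ∈ (g * u⁻¹) • T := by
    rw [hsmul]; simp [mul_assoc]
  have h1sub : (g * u⁻¹) • T ⊆ E := by
    rw [hsmul]
    intro t ht
    rcases Finset.mem_insert.mp ht with h1 | h1
    · have hgg : g * u⁻¹ * u = g := by group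
      rw [h1, hgg]; exact Finset.mem_insert_self g C'
    · rw [Finset.mem_singleton.mp h1]
      have : g * u⁻¹ * v = g * h := by rw [hhuv, mul_assoc]
      rw [this]
      exact Finset.mem_insert_of_mem (hCC' hgh)
  have h2mem : g ∈ (g * v⁻¹) • T := by
    rw [hsmul]; simp [mul_assoc]
  have h2sub : (g * v⁻¹) • T ⊆ E := by
    rw [hsmul]
    intro t ht
    rcases Finset.mem_insert.mp ht with h1 | h1
    · rw [h1]
      have : g * v⁻¹ * u = g * h⁻¹ := by rw [hhuv]; group
      rw [this]
      exact Finset.mem_insert_of_mem (hCC' hghi)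
    · have hgg : g * v⁻¹ * v = g := by group
      rw [Finset.mem_singleton.mp h1, hgg]; exact Finset.mem_insert_self g C'
  have heq := hweak T hTS E hE g (Finset.mem_insert_self g C')
    (hErase ▸ hC') (g * u⁻¹) (g * v⁻¹) h1mem h1sub h2mem h2sub
  have huv : u = v := by
    have := mul_left_cancel heq
    exact inv_injective this
  have hh1 : h = 1 := by rw [hhuv, huv, inv_mul_cancel]
  rw [hh1, mul_one] at hgh
  exact hgC hgh
end

section
/- Let G be a countable group, S a finite subset of G, C an S-UCP convexoid on G, A a finite alphabet, T ⊆ A^S a family of patterns with k-TEP (k-uniform extensions at all translated lax corners), and X the SFT defined by T. Suppose C, C ∪ {a} ∈ C with a ∉ C and P : C → A is T-legal. Then: if there exists g ∈ G with a ∈ gS ⊆ C ∪ {a}, the number of T-legal extensions Q : C ∪ {a} → A of P equals k; otherwise it equals |A|. -/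
open Pointwise

attribute [local instance] Classical.propDecidable

/-- `S`-unique corner positioning: each lax corner of a convex set is covered by at most
one translate of `S` inside the set. -/
def SUCP {G : Type*} [Group G] (𝒞 : Set (Finset G)) (S : Finset G) : Prop :=
  ∀ C ∈ 𝒞, ∀ a ∈ C, a ∉ memClosure 𝒞 (C.erase a) →
    ∀ g₁ g₂ : G, a ∈ g₁ • S → g₁ • S ⊆ C → a ∈ g₂ • S → g₂ • S ⊆ C → g₁ = g₂

/-- `T ⊆ A^S` has `k`-uniform extensions at `s₀ ∈ S`: however the other coordinates are
filled, exactly `k` values at `s₀` give a pattern in `T`. -/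
def uniformExt {G : Type*} {A : Type*} (S : Finset G) (T : Set (S → A)) (s₀ : S)
    (k : ℕ) : Prop :=
  ∀ Q : S → A, {b : A | (fun s : S => if s = s₀ then b else Q s) ∈ T}.ncard = k

/-- `s ∈ S` is a translated lax corner of `S` (w.r.t. `𝒞`). -/
def IsTranslatedLaxCorner {G : Type*} [Group G] (𝒞 : Set (Finset G)) (S : Finset G)
    (s : S) : Prop :=
  ∃ g : G, g * (s : G) ∉ memClosure 𝒞 ((g • S).erase (g * (s : G)))

/-- `T` is `k`-TEP: it has `k`-uniform extensions at every translated lax corner of `S`. -/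
def IsTEP {G : Type*} [Group G] {A : Type*} (𝒞 : Set (Finset G)) (S : Finset G)
    (T : Set (S → A)) (k : ℕ) : Prop :=
  ∀ s : S, IsTranslatedLaxCorner 𝒞 S s → uniformExt S T s k

/-- `x` is `T`-legal on `C`: every translate of `S` inside `C` carries a pattern of `T`. -/
def legalOn {G : Type*} [Group G] {A : Type*} (S : Finset G) (T : Set (S → A))
    (x : G → A) (C : Finset G) : Prop :=
  ∀ g : G, g • S ⊆ C → (fun s : S => x (g * (s : G))) ∈ T

/-- The SFT defined by the allowed patterns `T ⊆ A^S`. -/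
def TEPX {G : Type*} [Group G] {A : Type*} (S : Finset G) (T : Set (S → A)) :
    Set (G → A) :=
  {x | ∀ g : G, (fun s : S => x (g * (s : G))) ∈ T}

/-- Counting extensions along a corner addition: if `a` can be covered by a (unique)
translate of `S` inside `C ∪ {a}`, a `T`-legal pattern on `C` has exactly `k` legal
extensions to `C ∪ {a}`; otherwise it has `|A|` of them. -/
theorem stmt8 {G : Type*} [Group G] [Countable G] (S : Finset G) (𝒞 : Set (Finset G))
    (hconv : IsConvexoid 𝒞) (hucp : SUCP 𝒞 S)
    {A : Type*} [Fintype A] (T : Set (S → A)) (k : ℕ) (htep : IsTEP 𝒞 S T k)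
    {C : Finset G} {a : G} (hC : C ∈ 𝒞) (ha : a ∉ C) (hCa : insert a C ∈ 𝒞)
    {P : G → A} (hP : legalOn S T P C) :
    {b : A | legalOn S T (Function.update P a b) (insert a C)}.ncard =
      if ∃ g : G, a ∈ g • S ∧ g • S ⊆ insert a C then k else Fintype.card A := by
  by_cases hex : ∃ g : G, a ∈ g • S ∧ g • S ⊆ insert a C
  · rw [if_pos hex]
    obtain ⟨g₀, hag, hsub⟩ := hex
    obtain ⟨s₀, hs₀S, hs₀⟩ := Finset.mem_smul_finset.mp hag
    rw [smul_eq_mul] at hs₀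
    set s₀' : S := ⟨s₀, hs₀S⟩ with hs₀'
    -- the corner condition at `a`
    have haC : a ∉ memClosure 𝒞 ((insert a C).erase a) := by
      rw [Finset.erase_insert ha]
      intro h
      exact ha (h C hC (subset_refl C))
    -- `s₀'` is a translated lax corner
    have htlc : IsTranslatedLaxCorner 𝒞 S s₀' := by
      refine ⟨g₀, ?_⟩
      show g₀ * s₀ ∉ _
      rw [hs₀]
      intro h
      apply ha
      apply h C hC
      intro x hx
      rcases Finset.mem_erase.mp hx with ⟨hxa, hxS⟩
      rcases Finset.mem_insert.mp (hsub hxS) with h' | h'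
      · exact absurd h' hxa
      · exact h'
    have hunif := htep s₀' htlc (fun s : S => P (g₀ * (s : G)))
    -- rewriting the update pattern
    have hpat : ∀ b : A, (fun s : S => Function.update P a b (g₀ * (s : G))) =
        (fun s : S => if s = s₀' then b else P (g₀ * (s : G))) := by
      intro b
      funext s
      rw [Function.update_apply]
      have : (g₀ * (s : G) = a) ↔ (s = s₀') := by
        rw [← hs₀]
        constructor
        · intro h; exact Subtype.ext (mul_left_cancel h)
        · intro h; rw [h]
      by_cases h : s = s₀'
      · rw [if_pos (this.mpr h), if_pos h]
      · rw [if_neg (fun hh => h (this.mp hh)), if_neg h]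
    rw [← hunif]
    congr 1
    ext b
    simp only [Set.mem_setOf_eq]
    constructor
    · intro hb
      have := hb g₀ hsub
      rwa [hpat b] at this
    · intro hb g hg
      by_cases hag' : a ∈ g • S
      · have hgeq : g = g₀ :=
          hucp (insert a C) hCa a (Finset.mem_insert_self a C) haC g g₀ hag' hg hag hsub
        subst hgeq
        rwa [hpat b]
      · have hgC : g • S ⊆ C := by
          intro x hx
          rcases Finset.mem_insert.mp (hg hx) with h' | h'
          · exact absurd (h' ▸ hx) hag'
          · exact h'
        have heq : (fun s : S => Function.update P a b (g * (s : G))) =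
            (fun s : S => P (g * (s : G))) := by
          funext s
          rw [Function.update_apply, if_neg]
          intro h
          exact hag' (h ▸ Finset.smul_mem_smul_finset s.2)
        rw [heq]
        exact hP g hgC
  · rw [if_neg hex]
    push_neg at hex
    have : {b : A | legalOn S T (Function.update P a b) (insert a C)} = Set.univ := by
      ext b
      simp only [Set.mem_setOf_eq, Set.mem_univ, iff_true]
      intro g hg
      have hag' : a ∉ g • S := fun h => (hex g h) hg
      have hgC : g • S ⊆ C := by
        intro x hx
        rcases Finset.mem_insert.mp (hg hx) with h' | h'
        · exact absurd (h' ▸ hx) hag'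
        · exact h'
      have heq : (fun s : S => Function.update P a b (g * (s : G))) =
          (fun s : S => P (g * (s : G))) := by
        funext s
        rw [Function.update_apply, if_neg]
        intro h
        exact hag' (h ▸ Finset.smul_mem_smul_finset s.2)
      rw [heq]
      exact hP g hgC
    rw [this, Set.ncard_univ, Nat.card_eq_fintype_card]
end

section
/- Let G be a countable group with an S-UCP convexoid C for a finite set S with |S| ≥ 2, and let X be the SFT defined by a 1-TEP family T ⊆ A^S. Then |X| ≥ |A|^{|S|-1}. If instead T is k-TEP with k ≥ 2 and A nonempty, then X is homeomorphic to the Cantor set (in particular uncountable). -/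
open Pointwise

attribute [local instance] Classical.propDecidable

/-!
Adding a corner `a` to a convex set `C`, the values at `a` that keep a legal pattern legal are
either all of `A` (no translate of `S` inside `insert a C` contains `a`) or, by S-UCP, are
governed by a single translate of `S` at one of its translated lax corners, so that there are
exactly `k` of them. Hence for `k ≥ 1` legal patterns on convex sets extend along corner
additions and, by compactness, to points of `X`. Every pattern on a convex set of size
`|S| - 1` is legal, which gives `|X| ≥ |A|^(|S|-1)`.

For `k ≥ 2`, enumerate the countable (and, by S-UCP, infinite) group so that all initial
segments are convex. Along this enumeration every point of `X` has `d n ≥ 2` continuations at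
step `n`, with `d n` independent of the point, so `X ≃ₜ ∏ n, Fin (d n)`; a unary prefix code
identifies this product with the Cantor space `ℕ → Bool`.
-/

lemma DependsOn.isLocallyConstant {ι : Type*} {α : ι → Type*} {β : Type*}
    [∀ i, TopologicalSpace (α i)] [∀ i, DiscreteTopology (α i)] {f : (∀ i, α i) → β}
    {s : Set ι} (hf : DependsOn f s) (hs : s.Finite) : IsLocallyConstant f :=
  (IsLocallyConstant.iff_exists_open f).2 fun x =>
    ⟨s.pi fun i => {x i}, isOpen_set_pi hs fun _ _ => isOpen_discrete _, by simp,
      fun _ hy => hf fun i hi => hy i hi⟩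

theorem nonempty_homeomorph_pi_fin_of_forall_exists_extend {X : Type*} [TopologicalSpace X]
    [CompactSpace X] [Nonempty X] {d : ℕ → ℕ} (code : X → ℕ → ℕ)
    (hcode : ∀ n, IsLocallyConstant (code · n)) (hlt : ∀ x n, code x n < d n)
    (hinj : Function.Injective code)
    (hext : ∀ x n, ∀ c < d n, ∃ x', (∀ j < n, code x' j = code x j) ∧ code x' n = c) :
    Nonempty (X ≃ₜ ∀ n, Fin (d n)) := by
  set Φ : X → ∀ n, Fin (d n) := fun x n => ⟨code x n, hlt x n⟩
  have hΦ : Continuous Φ := continuous_pi fun n =>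
    (IsLocallyConstant.desc _ Fin.val (hcode n) Fin.val_injective).continuous
  have hsurj : Function.Surjective Φ := by
    intro c
    set K : ℕ → Set X := fun n => {x | ∀ j < n, code x j = c j}
    have hK : ∀ n, (K n).Nonempty := by
      intro n
      induction n with
      | zero => exact ⟨Classical.arbitrary X, fun j hj => absurd hj j.not_lt_zero⟩
      | succ n ih =>
        obtain ⟨x, hx⟩ := ih
        obtain ⟨x', hx', hn⟩ := hext x n (c n) (c n).2
        refine ⟨x', fun j hj => ?_⟩
        rcases Nat.lt_succ_iff_lt_or_eq.1 hj with hj | rfl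
        · exact (hx' j hj).trans (hx j hj)
        · exact hn
    have hKcl : ∀ n, IsClosed (K n) := fun n => by
      simp only [K, Set.ofPred_forall]
      exact isClosed_iInter fun j => isClosed_iInter fun _ => (hcode j).isClosed_fiber _
    obtain ⟨x, hx⟩ := IsCompact.nonempty_iInter_of_sequence_nonempty_isCompact_isClosed K
      (fun n x hx j hj => hx j (by omega)) hK (hKcl 0).isCompact hKcl
    exact ⟨x, funext fun n => Fin.ext (Set.mem_iInter.1 hx (n + 1) n n.lt_succ_self)⟩
  have hΦinj : Function.Injective Φ := fun x y h =>
    hinj (funext fun n => congrArg Fin.val (congrFun h n))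
  exact ⟨hΦ.homeoOfEquivCompactToT2 (f := Equiv.ofBijective Φ ⟨hΦinj, hsurj⟩)⟩

namespace UnaryCode

/-- Values `c ≤ m` are coded by the words `trueᶜ false` for `c < m` and `trueᵐ`, a complete
prefix code; `blockValue m u q` is the value of the code word of `u` starting at `q`, and
`blockLength m c` is the length of the word of `c`. -/
def blockValue (m : ℕ) (u : ℕ → Bool) (q : ℕ) : ℕ :=
  Nat.find (⟨m, .inl rfl⟩ : ∃ c, c = m ∨ u (q + c) = false)

def blockLength (m c : ℕ) : ℕ := if c < m then c + 1 else c

lemma blockValue_le (m : ℕ) (u : ℕ → Bool) (q : ℕ) : blockValue m u q ≤ m :=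
  Nat.find_min' _ (.inl rfl)

lemma le_blockLength (m c : ℕ) : c ≤ blockLength m c := by
  unfold blockLength; split <;> omega

lemma blockValue_eq {m c q : ℕ} {u : ℕ → Bool} (hc : c ≤ m)
    (hu : ∀ p < blockLength m c, u (q + p) = decide (p < c)) : blockValue m u q = c := by
  rw [blockValue, Nat.find_eq_iff]
  refine ⟨?_, fun p hp => ?_⟩
  · by_cases hcm : c < m
    · exact .inr (by simpa using hu c (by simp [blockLength, hcm]))
    · exact .inl (by omega)
  · have := hu p (hp.trans_le (le_blockLength m c))
    simp only [decide_eq_true hp] at this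
    simp only [this, Bool.true_eq_false, or_false]
    omega

lemma apply_eq_of_lt_blockLength {m p q : ℕ} {u : ℕ → Bool}
    (hp : p < blockLength m (blockValue m u q)) :
    u (q + p) = decide (p < blockValue m u q) := by
  obtain ⟨hspec, hmin⟩ := (Nat.find_eq_iff _).1 (rfl : blockValue m u q = _)
  by_cases hpc : p < blockValue m u q
  · have := hmin p hpc
    simp only [not_or, Bool.not_eq_false] at this
    simp [this.2, hpc]
  · have hcm : blockValue m u q < m := by
      by_contra h
      simp only [blockLength, h, if_false] at hp
      omega
    have hpc' : p = blockValue m u q := by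
      simp only [blockLength, hcm, if_true] at hp
      omega
    subst hpc'
    simpa [hcm.ne] using hspec

lemma blockValue_congr {m q : ℕ} {u v : ℕ → Bool}
    (h : ∀ p < blockLength m (blockValue m u q), v (q + p) = u (q + p)) :
    blockValue m v q = blockValue m u q :=
  blockValue_eq (blockValue_le m u q) fun p hp => (h p hp).trans (apply_eq_of_lt_blockLength hp)

variable (d : ℕ → ℕ)

def blockStart (u : ℕ → Bool) : ℕ → ℕ
  | 0 => 0
  | n + 1 => blockStart u n + blockLength (d n - 1) (blockValue (d n - 1) u (blockStart u n))

def decode (u : ℕ → Bool) (n : ℕ) : ℕ := blockValue (d n - 1) u (blockStart d u n)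

variable {d}

lemma blockStart_succ (u : ℕ → Bool) (n : ℕ) :
    blockStart d u (n + 1) = blockStart d u n + blockLength (d n - 1) (decode d u n) := rfl

lemma blockStart_le_sum (u : ℕ → Bool) (n : ℕ) :
    blockStart d u n ≤ ∑ j ∈ Finset.range n, d j := by
  induction n with
  | zero => simp [blockStart]
  | succ n ih =>
    have := blockValue_le (d n - 1) u (blockStart d u n)
    rw [blockStart_succ, Finset.sum_range_succ, decode, blockLength]
    split <;> omega

lemma blockStart_mono (u : ℕ → Bool) : Monotone (blockStart d u) :=
  monotone_nat_of_le_succ fun n => by rw [blockStart_succ]; omega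

lemma le_blockStart (hd : ∀ n, 2 ≤ d n) (u : ℕ → Bool) (n : ℕ) : n ≤ blockStart d u n := by
  induction n with
  | zero => rfl
  | succ n ih =>
    have := hd n
    rw [blockStart_succ, blockLength]
    split <;> omega

lemma decode_congr {u v : ℕ → Bool} {n : ℕ} (h : ∀ p < blockStart d u n, v p = u p) :
    (∀ j < n, decode d v j = decode d u j) ∧ blockStart d v n = blockStart d u n := by
  induction n with
  | zero => exact ⟨fun j hj => absurd hj j.not_lt_zero, rfl⟩
  | succ n ih =>
    obtain ⟨hdec, hstart⟩ := ih fun p hp => h p (hp.trans_le (blockStart_mono u n.le_succ))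
    have hn : decode d v n = decode d u n := by
      rw [decode, decode, hstart]
      exact blockValue_congr fun p hp => h _ (by rw [blockStart_succ]; unfold decode; omega)
    refine ⟨fun j hj => ?_, by rw [blockStart_succ, blockStart_succ, hstart, hn]⟩
    rcases Nat.lt_succ_iff_lt_or_eq.1 hj with hj | rfl
    · exact hdec j hj
    · exact hn

lemma decode_lt (hd : ∀ n, 2 ≤ d n) (u : ℕ → Bool) (n : ℕ) : decode d u n < d n := by
  have := blockValue_le (d n - 1) u (blockStart d u n)
  have := hd n
  unfold decode
  omega

lemma decode_injective (hd : ∀ n, 2 ≤ d n) : Function.Injective (decode d) := by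
  intro u v huv
  have hagree : ∀ n, ∀ p < blockStart d u n, v p = u p := by
    intro n
    induction n with
    | zero => exact fun p hp => absurd hp p.not_lt_zero
    | succ n ih =>
      intro p hp
      have hstart := (decode_congr ih).2
      by_cases hpn : p < blockStart d u n
      · exact ih p hpn
      obtain ⟨r, rfl⟩ := Nat.exists_eq_add_of_le (not_lt.1 hpn)
      rw [blockStart_succ] at hp
      have hr : r < blockLength (d n - 1) (decode d u n) := by omega
      have hv := congrFun huv n
      have hu' : u (blockStart d u n + r) = decide (r < decode d u n) :=
        apply_eq_of_lt_blockLength hr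
      have hv' : v (blockStart d v n + r) = decide (r < decode d v n) :=
        apply_eq_of_lt_blockLength (show r < blockLength _ (decode d v n) by rwa [← hv])
      rw [hu', ← hstart, hv', hv]
  funext p
  exact (hagree (p + 1) p ((le_blockStart hd u (p + 1)).trans_lt' p.lt_succ_self)).symm

lemma exists_decode_eq_of_lt (u : ℕ → Bool) {n c : ℕ} (hc : c < d n) :
    ∃ v, (∀ j < n, decode d v j = decode d u j) ∧ decode d v n = c := by
  set q := blockStart d u n
  obtain ⟨hdec, hstart⟩ := decode_congr (u := u)
    (v := fun p => if p < q then u p else decide (p - q < c)) fun p hp => if_pos hp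
  refine ⟨_, hdec, ?_⟩
  rw [decode, hstart]
  exact blockValue_eq (by omega) fun p _ => by simp [q]

lemma isLocallyConstant_decode (n : ℕ) : IsLocallyConstant (decode d · n) := by
  refine DependsOn.isLocallyConstant (s := Set.Iio (∑ j ∈ Finset.range (n + 1), d j))
    (fun u v h => ?_) (Set.finite_Iio _)
  exact (decode_congr (u := v) fun p hp =>
    h p (hp.trans_le (blockStart_le_sum v (n + 1)))).1 n n.lt_succ_self

end UnaryCode

open UnaryCode in
theorem nonempty_homeomorph_pi_fin_natBool {d : ℕ → ℕ} (hd : ∀ n, 2 ≤ d n) :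
    Nonempty ((∀ n, Fin (d n)) ≃ₜ (ℕ → Bool)) :=
  (nonempty_homeomorph_pi_fin_of_forall_exists_extend (decode d) isLocallyConstant_decode
    (decode_lt hd) (decode_injective hd) fun u _ _ => exists_decode_eq_of_lt u).map
    Homeomorph.symm

section Rank

variable {A : Type*} [LinearOrder A]

noncomputable def rankIn (s : Finset A) (b : A) : ℕ := (s.filter (· < b)).card

lemma rankIn_lt_card {s : Finset A} {b : A} (hb : b ∈ s) : rankIn s b < s.card :=
  Finset.card_lt_card (Finset.filter_ssubset.2 ⟨b, hb, lt_irrefl b⟩)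

lemma rankIn_strictMonoOn (s : Finset A) : StrictMonoOn (rankIn s) s := by
  intro b hb b' _ hlt
  refine Finset.card_lt_card ((Finset.ssubset_iff_of_subset fun x hx => ?_).2 ⟨b, ?_, ?_⟩)
  · simp only [Finset.mem_filter] at hx ⊢
    exact ⟨hx.1, hx.2.trans hlt⟩
  · simpa [hlt] using hb
  · simp

lemma exists_rankIn_eq {s : Finset A} {c : ℕ} (hc : c < s.card) : ∃ b ∈ s, rankIn s b = c := by
  obtain ⟨b, hb, h⟩ := Finset.surj_on_of_inj_on_of_card_le (t := Finset.range s.card)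
    (fun b _ => rankIn s b) (fun _ hb => Finset.mem_range.2 (rankIn_lt_card hb))
    (fun _ _ hb hb' h => (rankIn_strictMonoOn s).injOn hb hb' h) (by simp) c
    (Finset.mem_range.2 hc)
  exact ⟨b, hb, h.symm⟩

end Rank

section Branching

variable {ι A : Type*} [Fintype A]

noncomputable def nextValues (Y : Set (ι → A)) (a : ℕ → ι) (y : ι → A) (n : ℕ) : Finset A :=
  Finset.univ.filter fun b => ∃ y' ∈ Y, (∀ j < n, y' (a j) = y (a j)) ∧ y' (a n) = b

variable {Y : Set (ι → A)} {a : ℕ → ι}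

lemma mem_nextValues_iff {y : ι → A} {n : ℕ} {b : A} :
    b ∈ nextValues Y a y n ↔ ∃ y' ∈ Y, (∀ j < n, y' (a j) = y (a j)) ∧ y' (a n) = b := by
  simp [nextValues]

lemma mem_nextValues {y : ι → A} (hy : y ∈ Y) (n : ℕ) : y (a n) ∈ nextValues Y a y n :=
  mem_nextValues_iff.2 ⟨y, hy, fun _ _ => rfl, rfl⟩

lemma nextValues_congr {y y' : ι → A} {n : ℕ} (h : ∀ j < n, y' (a j) = y (a j)) :
    nextValues Y a y' n = nextValues Y a y n := by
  ext b
  simp only [mem_nextValues_iff]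
  exact exists_congr fun z => and_congr_right fun _ => and_congr_left fun _ =>
    forall₂_congr fun j hj => by rw [h j hj]

variable [LinearOrder A]

variable (Y a) in
noncomputable def branchCode (y : ι → A) (n : ℕ) : ℕ := rankIn (nextValues Y a y n) (y (a n))

lemma branchCode_congr {y y' : ι → A} {n : ℕ} (h : ∀ j ≤ n, y' (a j) = y (a j)) :
    branchCode Y a y' n = branchCode Y a y n := by
  rw [branchCode, branchCode, nextValues_congr fun j hj => h j hj.le, h n le_rfl]

theorem nonempty_homeomorph_pi_fin_of_card_nextValues [TopologicalSpace A] [DiscreteTopology A]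
    (hY : IsClosed Y) (hne : Y.Nonempty) (ha : Function.Surjective a) {d : ℕ → ℕ}
    (hd : ∀ y ∈ Y, ∀ n, (nextValues Y a y n).card = d n) :
    Nonempty (Y ≃ₜ ∀ n, Fin (d n)) := by
  have : CompactSpace Y := isCompact_iff_compactSpace.1 hY.isCompact
  have : Nonempty Y := hne.to_subtype
  refine nonempty_homeomorph_pi_fin_of_forall_exists_extend (fun y => branchCode Y a y.1)
    (fun n => ?_) (fun y n => ?_) (fun y y' h => ?_) (fun y n c hc => ?_)
  · have : DependsOn (branchCode Y a · n) (a '' Set.Iic n) := fun y y' h =>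
      (branchCode_congr fun j hj => (h (a j) ⟨j, hj, rfl⟩).symm).symm
    exact (this.isLocallyConstant ((Set.finite_Iic n).image a)).comp_continuous
      continuous_subtype_val
  · rw [← hd y y.2 n]
    exact rankIn_lt_card (mem_nextValues y.2 n)
  · have hagree : ∀ n, ∀ j < n, y'.1 (a j) = y.1 (a j) := by
      intro n
      induction n with
      | zero => exact fun j hj => absurd hj j.not_lt_zero
      | succ n ih =>
        have hE : nextValues Y a y' n = nextValues Y a y n := nextValues_congr ih
        have hn : y'.1 (a n) = y.1 (a n) :=
          (rankIn_strictMonoOn _).injOn (hE ▸ mem_nextValues y'.2 n) (mem_nextValues y.2 n)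
            (by simpa [branchCode, hE] using (congrFun h n).symm)
        intro j hj
        rcases Nat.lt_succ_iff_lt_or_eq.1 hj with hj | rfl
        · exact ih j hj
        · exact hn
    refine Subtype.ext (funext fun i => ?_)
    obtain ⟨j, rfl⟩ := ha i
    exact (hagree (j + 1) j j.lt_succ_self).symm
  · rw [← hd y y.2 n] at hc
    obtain ⟨b, hb, rfl⟩ := exists_rankIn_eq hc
    obtain ⟨y', hy', hagree, rfl⟩ := mem_nextValues_iff.1 hb
    refine ⟨⟨y', hy'⟩, fun j hj => branchCode_congr fun i hi => hagree i (by omega), ?_⟩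
    rw [branchCode, nextValues_congr hagree]

end Branching

lemma exists_seq_image_range_of_forall_exists_insert {G : Type*} {P : Finset G → Prop}
    (h0 : P ∅) (hstep : ∀ C, P C → ∃ g ∉ C, P (insert g C)) :
    ∃ a : ℕ → G, (∀ n, a n ∉ (Finset.range n).image a) ∧ ∀ n, P ((Finset.range n).image a) := by
  choose next hnext hP using hstep
  let seq : ℕ → {C // P C} := fun n => Nat.rec ⟨∅, h0⟩ (fun _ C => ⟨_, hP C.1 C.2⟩) n
  let a : ℕ → G := fun n => next (seq n).1 (seq n).2
  have hseq : ∀ n, (seq n).1 = (Finset.range n).image a := by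
    intro n
    induction n with
    | zero => simp [seq]
    | succ n ih => rw [Finset.range_add_one, Finset.image_insert, ← ih]
  refine ⟨a, fun n => ?_, fun n => ?_⟩
  · rw [← hseq]
    exact hnext _ _
  · rw [← hseq]
    exact (seq n).2

section Convexoid

variable {G : Type*} {𝒞 : Set (Finset G)}

lemma notMem_memClosure {B C : Finset G} {a : G} (hC : C ∈ 𝒞) (hBC : B ⊆ C) (ha : a ∉ C) :
    a ∉ memClosure 𝒞 B :=
  fun h => ha (h C hC hBC)

lemma IsConvexoid.exists_notMem_memClosure_erase (hconv : IsConvexoid 𝒞) {B : Finset G}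
    (hB : B.Nonempty) : ∃ b ∈ B, b ∉ memClosure 𝒞 (B.erase b) := by
  obtain ⟨D, hD, hBD⟩ := hconv.2.1 B
  -- a largest convex `C ⊆ D` not containing `B`; its corner addition towards `D` must swallow `B`
  set F := D.powerset.filter fun C => C ∈ 𝒞 ∧ ¬ B ⊆ C
  have hF : (∅ : Finset G) ∈ F := by
    simp [F, hconv.1, Finset.subset_empty, hB.ne_empty]
  obtain ⟨C, hCF, hmax⟩ := F.exists_max_image Finset.card ⟨∅, hF⟩
  simp only [F, Finset.mem_filter, Finset.mem_powerset] at hCF hmax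
  obtain ⟨hCD, hC, hBC⟩ := hCF
  obtain ⟨a, haD, haC, hins⟩ :=
    hconv.2.2 C hC D hD (ssubset_of_subset_of_ne hCD fun h => hBC (h ▸ hBD))
  have hB : B ⊆ insert a C := by
    by_contra h
    have := hmax (insert a C) ⟨Finset.insert_subset haD hCD, hins, h⟩
    rw [Finset.card_insert_of_notMem haC] at this
    omega
  have haB : a ∈ B := by
    by_contra h
    exact hBC fun x hx => (Finset.mem_insert.1 (hB hx)).resolve_left (ne_of_mem_of_not_mem hx h)
  exact ⟨a, haB, notMem_memClosure hC (Finset.subset_insert_iff.1 hB) haC⟩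

lemma IsConvexoid.exists_subset_card_eq (hconv : IsConvexoid 𝒞) {D : Finset G} (hD : D ∈ 𝒞)
    {n : ℕ} (hn : n ≤ D.card) : ∃ C ∈ 𝒞, C ⊆ D ∧ C.card = n := by
  induction n with
  | zero => exact ⟨∅, hconv.1, Finset.empty_subset D, rfl⟩
  | succ n ih =>
    obtain ⟨C, hC, hCD, rfl⟩ := ih (by omega)
    obtain ⟨a, haD, haC, hins⟩ :=
      hconv.2.2 C hC D hD (ssubset_of_subset_of_ne hCD fun h => by subst h; omega)
    exact ⟨_, hins, Finset.insert_subset haD hCD, Finset.card_insert_of_notMem haC⟩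

lemma IsConvexoid.exists_monotone_seq_mem (hconv : IsConvexoid 𝒞) (e : ℕ → G) :
    ∃ D : ℕ → Finset G, Monotone D ∧ (∀ m, D m ∈ 𝒞) ∧ ∀ m, e m ∈ D (m + 1) := by
  choose up hup hsub using hconv.2.1
  let D : ℕ → Finset G := fun m => Nat.rec ∅ (fun m Dm => up (insert (e m) Dm)) m
  refine ⟨D, monotone_nat_of_le_succ fun m => (Finset.subset_insert _ _).trans (hsub _),
    fun m => ?_, fun m => hsub _ (Finset.mem_insert_self _ _)⟩
  cases m
  · exact hconv.1
  · exact hup _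

lemma IsConvexoid.exists_enumeration [Countable G] [Infinite G] (hconv : IsConvexoid 𝒞) :
    ∃ a : ℕ → G, Function.Surjective a ∧ (∀ n, a n ∉ (Finset.range n).image a) ∧
      ∀ n, (Finset.range n).image a ∈ 𝒞 := by
  obtain ⟨e, he⟩ := exists_surjective_nat G
  obtain ⟨D, hDmono, hD, hDe⟩ := hconv.exists_monotone_seq_mem e
  have hex : ∀ C : Finset G, ∃ m, ¬ D m ⊆ C := fun C => by
    obtain ⟨g, hg⟩ := Infinite.exists_notMem_finset C
    obtain ⟨m, rfl⟩ := he g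
    exact ⟨m + 1, fun h => hg (h (hDe m))⟩
  -- grow `C` by corner additions towards the first `D m` it does not contain yet
  let μ : Finset G → ℕ := fun C => Nat.find (hex C)
  let InTarget : Finset G → Prop := fun C => C ∈ 𝒞 ∧ C ⊆ D (μ C)
  obtain ⟨a, hnot, hgood⟩ := exists_seq_image_range_of_forall_exists_insert (P := InTarget)
    ⟨hconv.1, Finset.empty_subset _⟩ fun C ⟨hC, hCD⟩ => by
      obtain ⟨g, hgD, hgC, hins⟩ := hconv.2.2 C hC _ (hD _)
        (ssubset_of_subset_of_ne hCD fun h => Nat.find_spec (hex C) (h ▸ subset_rfl))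
      have hle : μ C ≤ μ (insert g C) := (Nat.le_find_iff _ _).2 fun m hm hDm =>
        Nat.find_min (hex C) hm fun h => hDm (h.trans (Finset.subset_insert g C))
      exact ⟨g, hgC, hins, Finset.insert_subset (hDmono hle hgD) (hCD.trans (hDmono hle))⟩
  have hcard : ∀ n, ((Finset.range n).image a).card = n := by
    intro n
    induction n with
    | zero => simp
    | succ n ih =>
      rw [Finset.range_add_one, Finset.image_insert, Finset.card_insert_of_notMem (hnot n), ih]
  refine ⟨a, fun g => ?_, hnot, fun n => (hgood n).1⟩
  obtain ⟨m, rfl⟩ := he g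
  obtain ⟨n, hn⟩ : ∃ n, m + 1 < μ ((Finset.range n).image a) := by
    by_contra! h
    set N := (D (m + 1)).card + 1
    have := Finset.card_le_card ((hgood N).2.trans (hDmono (h N)))
    rw [hcard N] at this
    omega
  obtain ⟨j, -, hj⟩ := Finset.mem_image.1 (not_not.1 (Nat.find_min (hex _) hn) (hDe m))
  exact ⟨j, hj⟩

variable [Group G] {S : Finset G}

lemma IsConvexoid.infinite_of_SUCP (hconv : IsConvexoid 𝒞) (hucp : SUCP 𝒞 S)
    (hS : 2 ≤ S.card) : Infinite G := by
  by_contra hfin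
  have : Fintype G := @Fintype.ofFinite G (not_infinite_iff_finite.1 hfin)
  obtain ⟨s₁, hs₁, s₂, hs₂, hne⟩ := Finset.one_lt_card.1 hS
  have huniv : (Finset.univ : Finset G) ∈ 𝒞 := by
    obtain ⟨D, hD, h⟩ := hconv.2.1 Finset.univ
    rwa [← Finset.univ_subset_iff.1 h]
  obtain ⟨a, -, ha⟩ := hconv.exists_notMem_memClosure_erase Finset.univ_nonempty
  have hmem : ∀ s ∈ S, a ∈ (a * s⁻¹) • S := fun s hs =>
    Finset.mem_smul_finset.2 ⟨s, hs, by simp [smul_eq_mul]⟩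
  have := hucp _ huniv a (Finset.mem_univ a) ha _ _ (hmem s₁ hs₁) (Finset.subset_univ _)
    (hmem s₂ hs₂) (Finset.subset_univ _)
  exact hne (inv_injective (mul_left_cancel this))

lemma IsConvexoid.le_card_of_isTEP {A : Type*} [Fintype A] [Nonempty A] {T : Set (S → A)}
    {k : ℕ} (hconv : IsConvexoid 𝒞) (hS : S.Nonempty) (htep : IsTEP 𝒞 S T k) :
    k ≤ Fintype.card A := by
  obtain ⟨s, hs, hcorner⟩ := hconv.exists_notMem_memClosure_erase hS
  have : IsTranslatedLaxCorner 𝒞 S ⟨s, hs⟩ := ⟨1, by simpa using hcorner⟩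
  rw [← htep _ this fun _ => Classical.arbitrary A, ← Nat.card_eq_fintype_card]
  exact Set.ncard_le_card _

end Convexoid

section Legal

variable {G : Type*} [Group G] {A : Type*} {𝒞 : Set (Finset G)} {S : Finset G}
  {T : Set (S → A)} {k : ℕ} {p q : G → A} {C D : Finset G}

lemma mul_mem_smul_finset (g : G) (s : S) : g * (s : G) ∈ g • S :=
  Finset.smul_mem_smul_finset s.2

lemma legalOn_congr (h : ∀ g ∈ C, q g = p g) (hp : legalOn S T p C) : legalOn S T q C := by
  intro g hg
  convert hp g hg using 2 with s
  exact h _ (hg (mul_mem_smul_finset g s))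

lemma legalOn.mono (hCD : C ⊆ D) (hp : legalOn S T p D) : legalOn S T p C :=
  fun g hg => hp g (hg.trans hCD)

lemma legalOn_of_card_lt (h : C.card < S.card) : legalOn S T p C := fun g hg =>
  absurd (Finset.card_le_card hg) (by rw [Finset.card_smul_finset]; omega)

lemma legalOn.update_mem (hp : legalOn S T p C) {a g : G} (b : A) (hg : g • S ⊆ insert a C)
    (hag : a ∉ g • S) : (fun s : S => Function.update p a b (g * s)) ∈ T := by
  convert hp g ((Finset.subset_insert_iff_of_notMem hag).1 hg) using 2 with s
  refine Function.update_of_ne (fun h => hag ?_) _ _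
  rw [← h]
  exact mul_mem_smul_finset g s

/-- By S-UCP, `g • S` is the only translate of `S` inside `insert a C` containing the corner `a`. -/
lemma legalOn_update_insert_iff (hucp : SUCP 𝒞 S) (hC : C ∈ 𝒞) {a g : G} (ha : a ∉ C)
    (hCa : insert a C ∈ 𝒞) (hp : legalOn S T p C) (hag : a ∈ g • S)
    (hgS : g • S ⊆ insert a C) (b : A) :
    legalOn S T (Function.update p a b) (insert a C) ↔
      (fun s : S => Function.update p a b (g * s)) ∈ T := by
  refine ⟨fun hb => hb g hgS, fun hb g' hg' => ?_⟩
  by_cases hag' : a ∈ g' • S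
  · have hcorner : a ∉ memClosure 𝒞 ((insert a C).erase a) := by
      rw [Finset.erase_insert ha]
      exact notMem_memClosure hC subset_rfl ha
    obtain rfl := hucp _ hCa a (Finset.mem_insert_self a C) hcorner g' g hag' hg' hag hgS
    exact hb
  · exact hp.update_mem b hg' hag'

lemma card_filter_legalOn_update [Fintype A] (hucp : SUCP 𝒞 S) (htep : IsTEP 𝒞 S T k)
    (hC : C ∈ 𝒞) {a : G} (ha : a ∉ C) (hCa : insert a C ∈ 𝒞) (hp : legalOn S T p C) :
    (Finset.univ.filter fun b => legalOn S T (Function.update p a b) (insert a C)).card =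
      if ∃ g : G, a ∈ g • S ∧ g • S ⊆ insert a C then k else Fintype.card A := by
  split_ifs with hcov
  · obtain ⟨g, hag, hgS⟩ := hcov
    obtain ⟨s₀, hs₀, has₀⟩ := Finset.mem_smul_finset.1 hag
    have hlax : IsTranslatedLaxCorner 𝒞 S ⟨s₀, hs₀⟩ :=
      ⟨g, by simpa [← has₀] using notMem_memClosure hC (Finset.subset_insert_iff.1 hgS) ha⟩
    have hpattern : ∀ b, (fun s : S => Function.update p a b (g * s)) =
        fun s : S => if s = ⟨s₀, hs₀⟩ then b else p (g * s) := fun b => funext fun s => by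
      simp [Function.update_apply, ← has₀, Subtype.ext_iff]
    rw [← htep _ hlax (fun s => p (g * s)), ← Set.ncard_coe_finset]
    congr 1
    ext b
    simp only [Finset.coe_filter, Finset.mem_univ, true_and, Set.mem_ofPred_eq,
      legalOn_update_insert_iff hucp hC ha hCa hp hag hgS, hpattern]
  · have hall : ∀ b, legalOn S T (Function.update p a b) (insert a C) := fun b g hg =>
      hp.update_mem b hg fun hag => hcov ⟨g, hag, hg⟩
    rw [Finset.filter_true_of_mem fun b _ => hall b, Finset.card_univ]

lemma exists_legalOn_update [Fintype A] [Nonempty A] (hucp : SUCP 𝒞 S)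
    (htep : IsTEP 𝒞 S T k) (hk : 1 ≤ k) (hC : C ∈ 𝒞) {a : G} (ha : a ∉ C)
    (hCa : insert a C ∈ 𝒞) (hp : legalOn S T p C) :
    ∃ b, legalOn S T (Function.update p a b) (insert a C) := by
  have hpos : 0 < (Finset.univ.filter fun b =>
      legalOn S T (Function.update p a b) (insert a C)).card := by
    rw [card_filter_legalOn_update hucp htep hC ha hCa hp]
    split_ifs
    · omega
    · exact Fintype.card_pos
  obtain ⟨b, hb⟩ := Finset.card_pos.1 hpos
  exact ⟨b, (Finset.mem_filter.1 hb).2⟩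

lemma exists_legalOn_extend [Fintype A] [Nonempty A] (hconv : IsConvexoid 𝒞)
    (hucp : SUCP 𝒞 S) (htep : IsTEP 𝒞 S T k) (hk : 1 ≤ k) (hC : C ∈ 𝒞) (hD : D ∈ 𝒞)
    (hCD : C ⊆ D) (hp : legalOn S T p C) :
    ∃ q : G → A, (∀ g ∈ C, q g = p g) ∧ legalOn S T q D := by
  obtain ⟨n, hn⟩ : ∃ n, D.card - C.card = n := ⟨_, rfl⟩
  induction n generalizing C p with
  | zero =>
    obtain rfl := Finset.eq_of_subset_of_card_le hCD (by omega)
    exact ⟨p, fun _ _ => rfl, hp⟩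
  | succ n ih =>
    obtain ⟨a, haD, haC, hins⟩ :=
      hconv.2.2 C hC D hD (ssubset_of_subset_of_ne hCD fun h => by subst h; omega)
    obtain ⟨b, hb⟩ := exists_legalOn_update hucp htep hk hC haC hins hp
    obtain ⟨q, hq, hqD⟩ := ih hins (Finset.insert_subset haD hCD) hb
      (by rw [Finset.card_insert_of_notMem haC]; omega)
    refine ⟨q, fun g hg => ?_, hqD⟩
    rw [hq g (Finset.mem_insert_of_mem hg), Function.update_of_ne (ne_of_mem_of_not_mem hg haC)]

lemma TEPX_eq_iInter_setOf_legalOn : TEPX S T = ⋂ C : Finset G, {y | legalOn S T y C} := by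
  ext y
  simp only [TEPX, Set.mem_iInter, Set.mem_ofPred_eq]
  exact ⟨fun hy C g _ => hy g, fun hy g => hy (g • S) g subset_rfl⟩

section Topology

variable [TopologicalSpace A] [DiscreteTopology A]

lemma isClosed_setOf_legalOn (C : Finset G) : IsClosed {y : G → A | legalOn S T y C} := by
  simp only [legalOn, Set.ofPred_forall]
  exact isClosed_iInter fun g => isClosed_iInter fun _ =>
    (isClosed_discrete T).preimage (by fun_prop)

lemma isClosed_TEPX : IsClosed (TEPX S T) := by
  rw [TEPX_eq_iInter_setOf_legalOn]
  exact isClosed_iInter isClosed_setOf_legalOn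

end Topology

lemma exists_mem_TEPX_eqOn [Fintype A] [Nonempty A] (hconv : IsConvexoid 𝒞)
    (hucp : SUCP 𝒞 S) (htep : IsTEP 𝒞 S T k) (hk : 1 ≤ k) (hC : C ∈ 𝒞)
    (hp : legalOn S T p C) : ∃ x ∈ TEPX S T, ∀ g ∈ C, x g = p g := by
  let _ : TopologicalSpace A := ⊥
  have : DiscreteTopology A := ⟨rfl⟩
  let Z : Finset G → Set (G → A) := fun F => {y | ∀ g ∈ C, y g = p g} ∩ {y | legalOn S T y F}
  have hZ : ∀ F, IsClosed (Z F) := fun F => by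
    refine IsClosed.inter ?_ (isClosed_setOf_legalOn F)
    simp only [Set.ofPred_forall]
    exact isClosed_iInter fun g => isClosed_iInter fun _ =>
      isClosed_eq (continuous_apply g) continuous_const
  have hZdir : Directed (· ⊇ ·) Z := fun F₁ F₂ => ⟨F₁ ∪ F₂,
    fun _ hy => ⟨hy.1, hy.2.mono Finset.subset_union_left⟩,
    fun _ hy => ⟨hy.1, hy.2.mono Finset.subset_union_right⟩⟩
  have hZne : ∀ F, (Z F).Nonempty := fun F => by
    obtain ⟨D, hD, hsub⟩ := hconv.2.1 (C ∪ F)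
    obtain ⟨q, hq, hqD⟩ := exists_legalOn_extend hconv hucp htep hk hC hD
      (Finset.subset_union_left.trans hsub) hp
    exact ⟨q, hq, hqD.mono (Finset.subset_union_right.trans hsub)⟩
  obtain ⟨x, hx⟩ := IsCompact.nonempty_iInter_of_directed_nonempty_isCompact_isClosed Z hZdir
    hZne (fun F => (hZ F).isCompact) hZ
  rw [Set.mem_iInter] at hx
  refine ⟨x, ?_, (hx ∅).1⟩
  rw [TEPX_eq_iInter_setOf_legalOn]
  exact Set.mem_iInter.2 fun F => (hx F).2

end Legal

section Subshift

variable {G : Type*} [Group G] {A : Type*} {𝒞 : Set (Finset G)} {S : Finset G}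
  {T : Set (S → A)} {k : ℕ}

theorem card_pow_le_mk_TEPX [Fintype A] (hS : 2 ≤ S.card) (hconv : IsConvexoid 𝒞)
    (hucp : SUCP 𝒞 S) (htep : IsTEP 𝒞 S T 1) :
    (Fintype.card A : Cardinal) ^ (S.card - 1) ≤ Cardinal.mk (TEPX S T) := by
  rcases isEmpty_or_nonempty A with hA | hA
  · rw [Fintype.card_eq_zero, Nat.cast_zero, zero_pow (by omega)]
    exact zero_le
  obtain ⟨D, hD, hSD⟩ := hconv.2.1 S
  obtain ⟨C, hC, -, hCcard⟩ := hconv.exists_subset_card_eq hD (n := S.card - 1)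
    (by have := Finset.card_le_card hSD; omega)
  have hsurj : Function.Surjective fun x : TEPX S T => fun c : C => x.1 c := by
    intro ρ
    obtain ⟨x, hx, hxρ⟩ := exists_mem_TEPX_eqOn hconv hucp htep le_rfl hC
      (p := fun g => if h : g ∈ C then ρ ⟨g, h⟩ else Classical.arbitrary A)
      (legalOn_of_card_lt (by omega))
    exact ⟨⟨x, hx⟩, funext fun c => by simp [hxρ c c.2]⟩
  calc (Fintype.card A : Cardinal) ^ (S.card - 1) = Cardinal.mk (C → A) := by
        rw [Cardinal.mk_fintype, Fintype.card_fun, Fintype.card_coe, hCcard, Nat.cast_pow]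
    _ ≤ Cardinal.mk (TEPX S T) := Cardinal.mk_le_of_surjective hsurj

lemma nextValues_TEPX_eq_filter [Fintype A] [Nonempty A] (hconv : IsConvexoid 𝒞)
    (hucp : SUCP 𝒞 S) (htep : IsTEP 𝒞 S T k) (hk : 1 ≤ k) {a : ℕ → G} {n : ℕ}
    (hnot : a n ∉ (Finset.range n).image a) (hconvex : (Finset.range (n + 1)).image a ∈ 𝒞)
    (x : G → A) :
    nextValues (TEPX S T) a x n = Finset.univ.filter fun b =>
      legalOn S T (Function.update x (a n) b) (insert (a n) ((Finset.range n).image a)) := by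
  rw [Finset.range_add_one, Finset.image_insert] at hconvex
  ext b
  rw [mem_nextValues_iff, Finset.mem_filter, and_iff_right (Finset.mem_univ b)]
  constructor
  · rintro ⟨y, hy, hagree, rfl⟩
    refine legalOn_congr (fun g hg => ?_) (fun g _ => hy g)
    rcases Finset.mem_insert.1 hg with rfl | hg
    · exact Function.update_self _ _ _
    · obtain ⟨j, hj, rfl⟩ := Finset.mem_image.1 hg
      rw [Function.update_of_ne (ne_of_mem_of_not_mem hg hnot),
        hagree j (Finset.mem_range.1 hj)]
  · intro hb
    obtain ⟨y, hy, hyb⟩ := exists_mem_TEPX_eqOn hconv hucp htep hk hconvex hb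
    refine ⟨y, hy, fun j hj => ?_, ?_⟩
    · have hmem : a j ∈ (Finset.range n).image a :=
        Finset.mem_image_of_mem a (Finset.mem_range.2 hj)
      rw [hyb _ (Finset.mem_insert_of_mem hmem),
        Function.update_of_ne (ne_of_mem_of_not_mem hmem hnot)]
    · rw [hyb _ (Finset.mem_insert_self _ _), Function.update_self]

theorem nonempty_homeomorph_TEPX_natBool [Countable G] [Fintype A] [Nonempty A]
    [TopologicalSpace A] [DiscreteTopology A] (hS : 2 ≤ S.card) (hconv : IsConvexoid 𝒞)
    (hucp : SUCP 𝒞 S) (htep : IsTEP 𝒞 S T k) (hk : 2 ≤ k) :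
    Nonempty (TEPX S T ≃ₜ (ℕ → Bool)) := by
  have := hconv.infinite_of_SUCP hucp hS
  obtain ⟨a, ha, hnot, hconvex⟩ := hconv.exists_enumeration
  let _ : LinearOrder A := LinearOrder.lift' _ (Fintype.equivFin A).injective
  let d : ℕ → ℕ := fun n => if ∃ g : G, a n ∈ g • S ∧
    g • S ⊆ insert (a n) ((Finset.range n).image a) then k else Fintype.card A
  have hkA : k ≤ Fintype.card A :=
    hconv.le_card_of_isTEP (Finset.card_pos.1 (by omega)) htep
  have hd : ∀ n, 2 ≤ d n := fun n => by
    dsimp only [d]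
    split_ifs <;> omega
  have hcard : ∀ x ∈ TEPX S T, ∀ n, (nextValues (TEPX S T) a x n).card = d n := by
    intro x hx n
    have hsucc := hconvex (n + 1)
    rw [nextValues_TEPX_eq_filter hconv hucp htep (by omega) (hnot n) hsucc x]
    rw [Finset.range_add_one, Finset.image_insert] at hsucc
    exact card_filter_legalOn_update hucp htep (hconvex n) (hnot n) hsucc fun g _ => hx g
  obtain ⟨x, hx, -⟩ := exists_mem_TEPX_eqOn hconv hucp htep (by omega) hconv.1
    (p := fun _ => Classical.arbitrary A) (legalOn_of_card_lt (by rw [Finset.card_empty]; omega))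
  obtain ⟨e₁⟩ := nonempty_homeomorph_pi_fin_of_card_nextValues isClosed_TEPX ⟨x, hx⟩ ha hcard
  obtain ⟨e₂⟩ := nonempty_homeomorph_pi_fin_natBool hd
  exact ⟨e₁.trans e₂⟩

end Subshift

/-- A `1`-TEP subshift with `|S| ≥ 2` has at least `|A|^(|S|-1)` configurations;
a `k`-TEP subshift with `k ≥ 2` (and `A` nonempty) is homeomorphic to the Cantor set. -/
theorem stmt10 {G : Type*} [Group G] [Countable G] (S : Finset G) (hS : 2 ≤ S.card)
    (𝒞 : Set (Finset G)) (hconv : IsConvexoid 𝒞) (hucp : SUCP 𝒞 S)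
    {A : Type*} [Fintype A] [TopologicalSpace A] [DiscreteTopology A]
    (T : Set (S → A)) (k : ℕ) (htep : IsTEP 𝒞 S T k) :
    (k = 1 →
      (Fintype.card A : Cardinal) ^ (S.card - 1) ≤ Cardinal.mk (TEPX S T)) ∧
    (2 ≤ k → Nonempty A → Nonempty ((TEPX S T) ≃ₜ (ℕ → Bool))) := by
  refine ⟨fun hk => ?_, fun hk hA => ?_⟩
  · subst hk
    exact card_pow_le_mk_TEPX hS hconv hucp htep
  · exact nonempty_homeomorph_TEPX_natBool hS hconv hucp htep hk
end

section
/- Let G be a left-invariantly ordered group, S a finite subset in good position (1_G ∈ S and 1_G is the maximum of S), A a finite alphabet, and T ⊆ A^S a family with k-uniform {1_G}-extensions. Let C be a finite subset of G and E = {g ∈ C : gS ⊄ C} its S-contour. Then every pattern P : E → A has exactly k^{|C|−|E|} T-legal extensions to C. -/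
open Pointwise

attribute [local instance] Classical.propDecidable

/-!
Order the interior `F = C \ E` (the points `g` with `gS ⊆ C`) and fill it in increasing order.
Since `1` is the maximum of `S`, the translate `gS` lies in `{x ≤ g}` and meets the position `g`
only through `s = 1`. So once all positions below `g` are filled, the constraint at `g` involves
the new value at `g` alone, and exactly `k` values satisfy it; constraints at smaller points do
not see it. Each point of `F` thus multiplies the count by `k`.
-/

open Function

lemma update_mul_eq_ite {G A : Type*} [Group G] {S : Finset G} (h1 : (1 : G) ∈ S)
    (Q : G → A) (a : G) (b : A) :
    (fun s : S => update Q a b (a * s)) =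
      fun s : S => if s = ⟨1, h1⟩ then b else Q (a * s) := by
  funext s
  have hs : a * s = a ↔ s = ⟨1, h1⟩ := by
    rw [mul_eq_left, ← Subtype.coe_inj]
  split_ifs with h
  · rw [hs.mpr h, update_self]
  · rw [update_of_ne (mt hs.mp h)]

def legalFillings {G A : Type*} [Group G] (S : Finset G) (T : Set (S → A)) (D : Finset G)
    (P : G → A) : Set (G → A) :=
  {Q | (∀ g ∉ D, Q g = P g) ∧ ∀ g ∈ D, (fun s : S => Q (g * s)) ∈ T}

section legalFillings

variable {G A : Type*} [Group G] {S : Finset G} {T : Set (S → A)}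

lemma injOn_domRestrict_legalFillings {C D : Finset G} (hDC : D ⊆ C) (P : G → A) :
    Set.InjOn (C : Set G).domRestrict (legalFillings S T D P) := by
  intro Q hQ R hR hQR
  funext g
  by_cases hg : g ∈ D
  · exact congrFun hQR ⟨g, hDC hg⟩
  · rw [hQ.1 g hg, hR.1 g hg]

lemma finite_legalFillings [Finite A] (D : Finset G) (P : G → A) :
    (legalFillings S T D P).Finite :=
  Set.Finite.of_finite_image (Set.toFinite _) (injOn_domRestrict_legalFillings subset_rfl P)

variable [LinearOrder G] [CovariantClass G G (· * ·) (· < ·)]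

lemma pattern_update_of_lt (hgood : ∀ s ∈ S, s ≤ 1) (Q : G → A) {a g : G} (hga : g < a)
    (b : A) : (fun s : S => update Q a b (g * s)) = fun s : S => Q (g * s) := by
  have := mulLeftMono_of_mulLeftStrictMono G
  funext s
  exact update_of_ne ((mul_le_of_le_one_right' (hgood s s.2)).trans_lt hga).ne _ _

variable {a : G} {D : Finset G} {P : G → A}

lemma update_mem_legalFillings_insert (hgood : ∀ s ∈ S, s ≤ 1) (haD : ∀ x ∈ D, x < a)
    {Q : G → A} (hQ : Q ∈ legalFillings S T D P) {b : A}
    (hb : (fun s : S => update Q a b (a * s)) ∈ T) :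
    update Q a b ∈ legalFillings S T (insert a D) P := by
  refine ⟨fun g hg => ?_, fun g hg => ?_⟩
  · rw [Finset.mem_insert, not_or] at hg
    rw [update_of_ne hg.1, hQ.1 g hg.2]
  · rcases Finset.mem_insert.mp hg with rfl | hgD
    · exact hb
    · rw [pattern_update_of_lt hgood Q (haD g hgD)]
      exact hQ.2 g hgD

lemma update_mem_legalFillings (hgood : ∀ s ∈ S, s ≤ 1) (haD : ∀ x ∈ D, x < a)
    {Q : G → A} (hQ : Q ∈ legalFillings S T (insert a D) P) :
    update Q a (P a) ∈ legalFillings S T D P := by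
  refine ⟨fun g hg => ?_, fun g hgD => ?_⟩
  · by_cases hga : g = a
    · rw [hga, update_self]
    · rw [update_of_ne hga, hQ.1 g (by simp [hga, hg])]
  · rw [pattern_update_of_lt hgood Q (haD g hgD)]
    exact hQ.2 g (Finset.mem_insert_of_mem hgD)

noncomputable def legalFillingsInsertEquiv (hgood : ∀ s ∈ S, s ≤ 1)
    (haD : ∀ x ∈ D, x < a) :
    legalFillings S T (insert a D) P ≃
      Σ Q : legalFillings S T D P,
        {b : A | (fun s : S => update (Q : G → A) a b (a * s)) ∈ T} where
  toFun Q := ⟨⟨update Q a (P a), update_mem_legalFillings hgood haD Q.2⟩,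
    ⟨Q.1 a, by simpa using Q.2.2 a (Finset.mem_insert_self a D)⟩⟩
  invFun Q := ⟨update Q.1 a Q.2, update_mem_legalFillings_insert hgood haD Q.1.2 Q.2.2⟩
  left_inv Q := by ext1; simp
  right_inv Q := by
    have haP : (Q.1 : G → A) a = P a := Q.1.2.1 a fun ha => (haD a ha).false
    refine Sigma.subtype_ext (Subtype.ext ?_) ?_ <;> simp [haP]

lemma ncard_legalFillings [Finite A] (h1 : (1 : G) ∈ S) (hgood : ∀ s ∈ S, s ≤ 1) {k : ℕ}
    (hext : uniformExt S T ⟨1, h1⟩ k) (D : Finset G) (P : G → A) :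
    (legalFillings S T D P).ncard = k ^ D.card := by
  induction D using Finset.induction_on_max generalizing P with
  | empty =>
    have : legalFillings S T ∅ P = {P} := by
      ext Q
      simp [legalFillings, funext_iff]
    simp [this]
  | insert a D haD ih =>
    have hfin := (finite_legalFillings (T := T) D P).to_subtype
    have := Fintype.ofFinite (legalFillings S T D P)
    have hfiber (Q : legalFillings S T D P) :
        Nat.card {b : A | (fun s : S => update (Q : G → A) a b (a * s)) ∈ T} = k := by
      simp only [Nat.card_coe_set_eq, update_mul_eq_ite h1]
      exact hext _
    rw [← Nat.card_coe_set_eq, Nat.card_congr (legalFillingsInsertEquiv hgood haD),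
      Nat.card_sigma, Finset.sum_congr rfl fun Q _ => hfiber Q, Finset.sum_const,
      Finset.card_univ, ← Nat.card_eq_fintype_card, Nat.card_coe_set_eq, ih,
      Finset.card_insert_of_notMem fun ha => (haD a ha).false, smul_eq_mul, pow_succ, mul_comm]

end legalFillings

section contour

variable {G A : Type*} [Group G] {S : Finset G} {T : Set (S → A)}

/-- The `DecidableEq` instance is left to unification: `legalOn` is elaborated with the
classical instance, the statement of `stmt12` with the one coming from the order. -/
lemma smul_finset_subset_iff_forall_mul_mem {_ : DecidableEq G} {C : Finset G} {g : G} :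
    g • S ⊆ C ↔ ∀ s ∈ S, g * s ∈ C := by
  simp only [Finset.subset_iff, Finset.mem_smul_finset, smul_eq_mul, forall_exists_index,
    and_imp, forall_apply_eq_imp_iff₂]

lemma domRestrict_image_legalFillings [DecidableEq G] (h1 : (1 : G) ∈ S) (C : Finset G)
    (P : G → A) :
    (C : Set G).domRestrict '' legalFillings S T (C.filter fun g => g • S ⊆ C) P =
      {q | ∃ Q : G → A, (∀ e ∈ C.filter (fun g => ¬ g • S ⊆ C), Q e = P e) ∧
        legalOn S T Q C ∧ ∀ c : (C : Set G), Q c = q c} := by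
  ext q
  constructor
  · rintro ⟨Q, hQ, rfl⟩
    refine ⟨Q, fun e he => hQ.1 e ?_, fun g hg => hQ.2 g ?_, fun c => rfl⟩
    · simp_all
    · have hg := smul_finset_subset_iff_forall_mul_mem.mp hg
      exact Finset.mem_filter.mpr
        ⟨by simpa using hg 1 h1, smul_finset_subset_iff_forall_mul_mem.mpr hg⟩
  · rintro ⟨Q, hE, hL, hQq⟩
    obtain rfl : (C : Set G).domRestrict Q = q := funext hQq
    set F := C.filter fun g => g • S ⊆ C
    have hagree : ∀ c ∈ C, (if c ∈ F then Q c else P c) = Q c := by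
      intro c hc
      split_ifs with hcF
      · rfl
      · exact (hE c (by simp_all [F])).symm
    refine ⟨fun g => if g ∈ F then Q g else P g,
      ⟨fun g hg => if_neg hg, fun g hg => ?_⟩, ?_⟩
    · have hgS := smul_finset_subset_iff_forall_mul_mem.mp (Finset.mem_filter.mp hg).2
      convert hL g (smul_finset_subset_iff_forall_mul_mem.mpr hgS) using 2 with s
      exact hagree _ (hgS s s.2)
    · funext c
      exact hagree c c.2

end contour

/-- Contour counting: for a left-invariantly ordered group, a shape `S` in good position
(`1` is the maximum of `S`), and `T` with `k`-uniform extensions at `1`, every pattern on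
the `S`-contour `E` of a finite set `C` has exactly `k^(|C|-|E|)` `T`-legal extensions
to `C`. -/
theorem stmt12 {G : Type*} [Group G] [LinearOrder G]
    [CovariantClass G G (· * ·) (· < ·)]
    (S : Finset G) (h1 : (1 : G) ∈ S) (hgood : ∀ s ∈ S, s ≤ 1)
    {A : Type*} [Fintype A] (T : Set (S → A)) (k : ℕ)
    (hext : uniformExt S T ⟨(1 : G), h1⟩ k)
    (C : Finset G) (P : G → A) :
    {q : ((C : Set G)) → A | ∃ Q : G → A,
        (∀ e ∈ C.filter (fun g : G => ¬ g • S ⊆ C), Q e = P e) ∧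
        legalOn S T Q C ∧ ∀ c : ((C : Set G)), Q (c : G) = q c}.ncard =
      k ^ (C.card - (C.filter (fun g : G => ¬ g • S ⊆ C)).card) := by
  rw [← domRestrict_image_legalFillings h1,
    (injOn_domRestrict_legalFillings (Finset.filter_subset _ C) P).ncard_image,
    ncard_legalFillings h1 hgood hext,
    ← C.card_filter_add_card_filter_not fun g => g • S ⊆ C, Nat.add_sub_cancel]
end

section
/- Let G be a group admitting a midpointed convexoid (for all g, h ∈ G, g lies in the intersection of all convex sets containing {gh, gh⁻¹}). Then for every convex set C and all g, h ∈ G and n > 0: if g ∈ C and gh^n ∈ C, then gh^i ∈ C for all 0 ≤ i ≤ n. -/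
open Pointwise

attribute [local instance] Classical.propDecidable

/-!
Enlarge `C` to a member `D ⊇ C` containing the whole progression and climb from `C` to `D`
by corner additions. Going back down, suppose `C` misses some `g * h ^ i` while `insert a C`
contains the progression: then `a = g * h ^ i` with `0 < i < n`, its neighbours
`g * h ^ (i ± 1)` already lie in `C`, and midpointedness forces `a ∈ C`.
-/

open Finset

section

variable {G : Type*}

theorem IsConvexoid.downward_induction {𝒞 : Set (Finset G)} (h𝒞 : IsConvexoid 𝒞)
    {D : Finset G} (hD𝒞 : D ∈ 𝒞) {P : Finset G → Prop} (hD : P D)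
    (insert_step : ∀ C ∈ 𝒞, ∀ a ∉ C, P (insert a C) → P C) :
    ∀ C ∈ 𝒞, C ⊆ D → P C := by
  intro C hC hCD
  refine strongDownwardInductionOn (p := fun C => C ∈ 𝒞 → C ⊆ D → P C) C
    (fun C ih _ hC hCD => ?_) (card_le_card hCD) hC hCD
  rcases hCD.eq_or_ssubset with rfl | hCD
  · exact hD
  obtain ⟨a, haD, haC, hins⟩ := h𝒞.2.2 C hC D hD𝒞 hCD
  have hinsD : insert a C ⊆ D := insert_subset haD hCD.subset
  exact insert_step C hC a haC (ih (card_le_card hinsD) (ssubset_insert haC) hins hinsD)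

variable [Group G] {𝒞 : Set (Finset G)}

def IsMidpointed (𝒞 : Set (Finset G)) : Prop :=
  ∀ g h : G, g ∈ memClosure 𝒞 {g * h, g * h⁻¹}

theorem mem_of_mul_mem_of_mul_inv_mem (hmid : IsMidpointed 𝒞)
    {C : Finset G} (hC : C ∈ 𝒞) {x h : G} (hxh : x * h ∈ C) (hxh' : x * h⁻¹ ∈ C) :
    x ∈ C :=
  hmid x h C hC (insert_subset hxh (singleton_subset_iff.2 hxh'))

theorem mul_pow_mem_of_mul_pow_mem_insert (hmid : IsMidpointed 𝒞)
    {C : Finset G} (hC : C ∈ 𝒞) {a g h : G} (haC : a ∉ C) {n : ℕ} (hg : g ∈ C)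
    (hgn : g * h ^ n ∈ C) (hins : ∀ i ≤ n, g * h ^ i ∈ insert a C) :
    ∀ i ≤ n, g * h ^ i ∈ C := by
  intro i hi
  by_contra hiC
  obtain rfl := (mem_insert.1 (hins i hi)).resolve_right hiC
  have h1 : h ≠ 1 := by rintro rfl; simp_all
  have hstep : ∀ k, g * h ^ k ≠ g * h ^ (k + 1) := fun k => by
    simpa [pow_succ] using h1
  obtain ⟨j, rfl⟩ : ∃ j, i = j + 1 :=
    Nat.exists_eq_succ_of_ne_zero (by rintro rfl; simp_all)
  have hjn : j + 2 ≤ n := lt_of_le_of_ne hi (by rintro rfl; exact haC hgn)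
  have hprev : g * h ^ j ∈ C := (mem_insert.1 (hins j (by omega))).resolve_left (hstep j)
  have hnext : g * h ^ (j + 2) ∈ C :=
    (mem_insert.1 (hins (j + 2) hjn)).resolve_left (hstep (j + 1)).symm
  refine hiC (mem_of_mul_mem_of_mul_inv_mem hmid hC (h := h) ?_ ?_)
  · rwa [mul_assoc, ← pow_succ]
  · rwa [pow_succ, mul_assoc, mul_inv_cancel_right]

end

/-- In a midpointed convexoid on a group, convex sets contain whole geometric
progressions between their elements: if `g ∈ C` and `g * h^n ∈ C` then `g * h^i ∈ C`
for all `0 ≤ i ≤ n`. -/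
theorem stmt15 {G : Type*} [Group G] (𝒞 : Set (Finset G)) (hconv : IsConvexoid 𝒞)
    (hmid : ∀ g h : G, g ∈ memClosure 𝒞 {g * h, g * h⁻¹}) :
    ∀ C ∈ 𝒞, ∀ g h : G, ∀ n : ℕ, 0 < n → g ∈ C → g * h ^ n ∈ C →
      ∀ i ≤ n, g * h ^ i ∈ C := by
  intro C hC g h n _
  obtain ⟨D, hD𝒞, hD⟩ := hconv.2.1 (C ∪ (range (n + 1)).image (g * h ^ ·))
  have hprogD : ∀ i ≤ n, g * h ^ i ∈ D := fun i hi =>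
    hD (mem_union_right _ (mem_image_of_mem _ (mem_range_succ_iff.2 hi)))
  refine hconv.downward_induction hD𝒞
    (P := fun C => g ∈ C → g * h ^ n ∈ C → ∀ i ≤ n, g * h ^ i ∈ C)
    (fun _ _ => hprogD) ?_ C hC (union_subset_left hD)
  intro C hC a haC hins hg hgn
  exact mul_pow_mem_of_mul_pow_mem_insert hmid hC haC hg hgn
    (hins (mem_insert_of_mem hg) (mem_insert_of_mem hgn))
end

section
/- If a group G is not torsion-free (some nonidentity element has finite order), then G admits no midpointed convexoid. -/
open Pointwise

attribute [local instance] Classical.propDecidable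

/-! Let `u` have prime order `p` and `K = ⟨u⟩`. Midpointedness (with `g = x t`, `h = t`) makes
every member `C` of the convexoid closed under halving: `x, x t² ∈ C → x t ∈ C`.
If `p = 2`, halving with `t = u` gives `x u ∈ C` for every `x ∈ C`, so `C` never meets `K` in
exactly one point. If `p` is odd and `x, x s ∈ C` with `s` of order `p`, the exponents
`k : ZMod p` with `x sᵏ ∈ C` form a set closed under midpoints containing `0` and `1`, hence all of
`ZMod p` (by Fermat, halving `p - 2` times doubles); so if `C` meets `K` in two points `a ≠ b`, it
also contains the third point `a (a⁻¹ b)²` of `K`.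
But corner addition climbs from `∅` to a member containing `K` one point at a time, so some member
meets `K` in exactly one point, and some in exactly two. -/

open Subgroup

section

variable {G : Type*} {𝒞 : Set (Finset G)}

theorem exists_card_filter_eq_of_corner
    (hcorner : ∀ C ∈ 𝒞, ∀ D ∈ 𝒞, C ⊂ D → ∃ a ∈ D, a ∉ C ∧ insert a C ∈ 𝒞)
    (P : G → Prop) [DecidablePred P] {C D : Finset G} (hC : C ∈ 𝒞) (hD : D ∈ 𝒞) (hCD : C ⊆ D)
    {m : ℕ} (hCm : (C.filter P).card ≤ m) (hDm : m ≤ (D.filter P).card) :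
    ∃ E ∈ 𝒞, (E.filter P).card = m := by
  obtain hCm | hCm := hCm.eq_or_lt
  · exact ⟨C, hC, hCm⟩
  have hne : C ≠ D := by rintro rfl; omega
  obtain ⟨a, haD, haC, haC𝒞⟩ := hcorner C hC D hD (hCD.ssubset_of_ne hne)
  have hcard : ((insert a C).filter P).card ≤ m := by
    rw [Finset.filter_insert]
    split_ifs
    · exact (Finset.card_insert_le _ _).trans hCm
    · exact hCm.le
  have : (D \ insert a C).card < (D \ C).card := by
    rw [Finset.sdiff_insert]
    exact Finset.card_erase_lt_of_mem (Finset.mem_sdiff.mpr ⟨haD, haC⟩)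
  exact exists_card_filter_eq_of_corner hcorner P haC𝒞 hD (Finset.insert_subset haD hCD) hcard hDm
termination_by (D \ C).card

theorem IsConvexoid.exists_card_filter_eq (h𝒞 : IsConvexoid 𝒞) {K : Set G} (hK : K.Finite)
    {m : ℕ} (hm : m ≤ K.ncard) : ∃ E ∈ 𝒞, (E.filter (· ∈ K)).card = m := by
  obtain ⟨hempty, hcover, hcorner⟩ := h𝒞
  obtain ⟨D, hD, hKD⟩ := hcover hK.toFinset
  have hKfilter : hK.toFinset ⊆ D.filter (· ∈ K) := fun x hx =>
    Finset.mem_filter.mpr ⟨hKD hx, hK.mem_toFinset.mp hx⟩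
  refine exists_card_filter_eq_of_corner hcorner _ hempty hD (Finset.empty_subset D) (by simp) ?_
  exact hm.trans ((Set.ncard_eq_toFinset_card K hK).trans_le (Finset.card_le_card hKfilter))

end

theorem ZMod.mem_of_midpoint_mem {p : ℕ} [Fact p.Prime] (hp2 : p ≠ 2) {S : Set (ZMod p)}
    (h0 : 0 ∈ S) (h1 : 1 ∈ S) (hmid : ∀ a ∈ S, ∀ b ∈ S, ∀ c, 2 * c = a + b → c ∈ S)
    (k : ZMod p) : k ∈ S := by
  have h2 : (2 : ZMod p) ≠ 0 := Ring.two_ne_zero (by rwa [ZMod.ringChar_zmod_n])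
  have half : ∀ a ∈ S, ∀ j : ℕ, a / 2 ^ j ∈ S := by
    intro a ha j
    induction j with
    | zero => simpa using ha
    | succ j ih => exact hmid 0 h0 _ ih _ (by field_simp; ring)
  -- Fermat: `2 ^ (p - 1) = 1`, so dividing by `2 ^ (p - 2)` is doubling.
  have double : ∀ a ∈ S, 2 * a ∈ S := by
    intro a ha
    have hfermat : (2 : ZMod p) ^ (p - 2) * 2 = 1 := by
      rw [← pow_succ, show p - 2 + 1 = p - 1 by have := (Fact.out : p.Prime).two_le; omega,
        ZMod.pow_card_sub_one_eq_one h2]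
    convert half a ha (p - 2) using 1
    field_simp
    linear_combination a * hfermat
  have add : ∀ a ∈ S, ∀ b ∈ S, a + b ∈ S :=
    fun a ha b hb => hmid _ (double a ha) _ (double b hb) _ (mul_add 2 a b)
  have natCast : ∀ n : ℕ, (n : ZMod p) ∈ S := by
    intro n
    induction n with
    | zero => simpa using h0
    | succ n ih => simpa using add _ ih _ h1
  simpa using natCast k.val

section

variable {G : Type*} [Group G]

theorem IsOfFinOrder.exists_prime_orderOf {g : G} (hg : IsOfFinOrder g) (hg1 : g ≠ 1) :
    ∃ u : G, (orderOf u).Prime := by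
  refine ⟨g ^ (orderOf g / (orderOf g).minFac), ?_⟩
  rw [orderOf_pow_orderOf_div hg.orderOf_pos.ne' (Nat.minFac_dvd _)]
  exact Nat.minFac_prime (by rwa [Ne, orderOf_eq_one_iff])

theorem pow_eq_pow_of_natCast_eq {s : G} {m n : ℕ} (h : (m : ZMod (orderOf s)) = n) :
    s ^ m = s ^ n :=
  pow_eq_pow_iff_modEq.mpr ((ZMod.natCast_eq_natCast_iff _ _ _).mp h)

def IsHalvingClosed (S : Set G) : Prop :=
  ∀ x t : G, x ∈ S → x * t ^ 2 ∈ S → x * t ∈ S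

theorem IsHalvingClosed.mul_pow_mem {S : Set G} (hS : IsHalvingClosed S) {s x : G}
    (hp : (orderOf s).Prime) (hp2 : orderOf s ≠ 2) (hx : x ∈ S) (hxs : x * s ∈ S) (k : ℕ) :
    x * s ^ k ∈ S := by
  have := Fact.mk hp
  have hT := ZMod.mem_of_midpoint_mem (S := {c | x * s ^ c.val ∈ S}) hp2
    (by simpa using hx) (by simpa [ZMod.val_one] using hxs) ?_ (k : ZMod (orderOf s))
  · rwa [Set.mem_ofPred_eq, pow_eq_pow_of_natCast_eq (n := k) (by simp)] at hT
  intro a ha b hb c hc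
  -- `b = a + 2 (c - a)`: halve the step from `a` to `b`
  have hsq : x * s ^ a.val * (s ^ (c - a).val) ^ 2 ∈ S := by
    rwa [mul_assoc, ← pow_mul, ← pow_add, pow_eq_pow_of_natCast_eq (n := b.val)]
    push_cast [ZMod.natCast_val, ZMod.cast_id]
    linear_combination hc
  have := hS _ _ ha hsq
  rwa [mul_assoc, ← pow_add, pow_eq_pow_of_natCast_eq (n := c.val)] at this
  simp

theorem isHalvingClosed_of_midpointed {𝒞 : Set (Finset G)}
    (hmid : ∀ g h : G, g ∈ memClosure 𝒞 {g * h, g * h⁻¹}) {C : Finset G} (hC : C ∈ 𝒞) :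
    IsHalvingClosed (C : Set G) := by
  intro x t hx hxt
  refine hmid (x * t) t C hC (Finset.insert_subset ?_ (Finset.singleton_subset_iff.mpr ?_))
  · simpa [pow_two, mul_assoc] using hxt
  · simpa using hx

theorem IsHalvingClosed.card_filter_zpowers_ne_one {E : Finset G}
    (hE : IsHalvingClosed (E : Set G)) {u : G} (hu : orderOf u = 2) :
    (E.filter (· ∈ zpowers u)).card ≠ 1 := by
  intro hcard
  obtain ⟨a, hEa⟩ := Finset.card_eq_one.mp hcard
  obtain ⟨haE, haK⟩ := Finset.mem_filter.mp (hEa ▸ Finset.mem_singleton_self a)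
  have hau : a * u ∈ E.filter (· ∈ zpowers u) := by
    refine Finset.mem_filter.mpr ⟨hE a u haE ?_, mul_mem haK (mem_zpowers u)⟩
    rwa [← hu, pow_orderOf_eq_one, mul_one]
  rw [hEa, Finset.mem_singleton, mul_eq_left] at hau
  simp [hau] at hu

theorem IsHalvingClosed.card_filter_zpowers_ne_two {E : Finset G}
    (hE : IsHalvingClosed (E : Set G)) {u : G} (hp : (orderOf u).Prime) (hp2 : orderOf u ≠ 2) :
    (E.filter (· ∈ zpowers u)).card ≠ 2 := by
  intro hcard
  obtain ⟨a, b, hab, hEab⟩ := Finset.card_eq_two.mp hcard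
  obtain ⟨haE, haK⟩ := Finset.mem_filter.mp (hEab ▸ Finset.mem_insert_self a {b})
  obtain ⟨hbE, hbK⟩ :=
    Finset.mem_filter.mp (hEab ▸ Finset.mem_insert_of_mem (Finset.mem_singleton_self b))
  set s := a⁻¹ * b
  have hsK : s ∈ zpowers u := mul_mem (inv_mem haK) hbK
  have hs1 : s ≠ 1 := by simpa [s, inv_mul_eq_one] using hab
  have hs : orderOf s = orderOf u := (hp.eq_one_or_self_of_dvd _
    (orderOf_dvd_of_mem_zpowers hsK)).resolve_left (by rwa [orderOf_eq_one_iff])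
  have hb : a * s = b := mul_inv_cancel_left a b
  have has2 : a * s ^ 2 ∈ E.filter (· ∈ zpowers u) :=
    Finset.mem_filter.mpr ⟨hE.mul_pow_mem (hs ▸ hp) (hs ▸ hp2) haE (hb ▸ hbE) 2,
      mul_mem haK (pow_mem hsK 2)⟩
  rw [hEab, Finset.mem_insert, Finset.mem_singleton, mul_eq_left, ← hb, mul_right_inj] at has2
  rcases has2 with h | h
  · exact hp2 (hs ▸ orderOf_eq_prime h hs1)
  · exact hs1 (by rwa [pow_two, mul_eq_left] at h)

end

/-- A group that is not torsion-free (some nonidentity element has finite order) admits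
no midpointed convexoid. -/
theorem stmt16 {G : Type*} [Group G] (hG : ∃ g : G, g ≠ 1 ∧ IsOfFinOrder g) :
    ¬ ∃ 𝒞 : Set (Finset G), IsConvexoid 𝒞 ∧
        ∀ g h : G, g ∈ memClosure 𝒞 {g * h, g * h⁻¹} := by
  rintro ⟨𝒞, h𝒞, hmid⟩
  obtain ⟨g, hg1, hg⟩ := hG
  obtain ⟨u, hp⟩ := hg.exists_prime_orderOf hg1
  have hK : (zpowers u : Set G).Finite := (orderOf_pos_iff.mp hp.pos).finite_zpowers
  have hKcard : (zpowers u : Set G).ncard = orderOf u := by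
    rw [← Nat.card_coe_set_eq, SetLike.coe_sort_coe, Nat.card_zpowers]
  obtain hp2 | hp2 := eq_or_ne (orderOf u) 2
  · obtain ⟨E, hE, hE1⟩ := h𝒞.exists_card_filter_eq hK (m := 1) (by omega)
    exact (isHalvingClosed_of_midpointed hmid hE).card_filter_zpowers_ne_one hp2 hE1
  · obtain ⟨E, hE, hE2⟩ := h𝒞.exists_card_filter_eq hK (m := 2) (by have := hp.two_le; omega)
    exact (isHalvingClosed_of_midpointed hmid hE).card_filter_zpowers_ne_two hp hp2 hE2
end

section
/- If G is a group in which some element g ≠ 1 has infinitely many roots (for infinitely many n there exists h with h^n = g), then G admits no midpointed convexoid. In particular, the additive groups ℚ and ℤ[1/n] (n ≥ 2) admit no midpointed convex geometry. -/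
open Pointwise

attribute [local instance] Classical.propDecidable

/-- `𝒞` is midpointed: `g` lies in the closure of `{g*h, g*h⁻¹}` for all `g, h`. -/
def Midpointed {G : Type*} [Group G] (𝒞 : Set (Finset G)) : Prop :=
  ∀ g h : G, g ∈ memClosure 𝒞 {g * h, g * h⁻¹}

/-- The additive subgroup `ℤ[1/n]` of `ℚ`. -/
def zInv (n : ℕ) : AddSubgroup ℚ :=
  AddSubgroup.closure {x : ℚ | ∃ k : ℕ, x = 1 / (n : ℚ) ^ k}

/-! Members of a midpointed convexoid are closed under midpoints, and corner addition lets one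
watch a finite set enter a member point by point. A nontrivial element `g` of finite order is
impossible: the last point of `⟨g⟩` to enter has both neighbours `a * g` and `a * g⁻¹` present
already. So every root `h` of `g` has infinite order, and a member containing `1` and `g = h ^ n`
contains all of `h ^ 0, …, h ^ n` (an interior point is forced in by a first-entry argument, then
induct on the gap). Such a member has more than `n` elements, for arbitrarily large `n`. -/

namespace IsConvexoid

variable {α : Type*} {𝒞 : Set (Finset α)}

theorem exists_insert_mem_flip (hconv : IsConvexoid 𝒞) {Q E : Finset α} (hQ : Q ∈ 𝒞)
    (hE : E ∈ 𝒞) (hQE : Q ⊆ E) (P : Finset α → Prop) (hPQ : P Q) (hPE : ¬ P E) :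
    ∃ R ∈ 𝒞, Q ⊆ R ∧ ∃ a, a ∉ R ∧ insert a R ∈ 𝒞 ∧ P R ∧ ¬ P (insert a R) := by
  obtain ⟨R, hQR, hmax⟩ := (E.powerset.filter fun R => R ∈ 𝒞 ∧ P R).exists_le_maximal
    (Finset.mem_filter.mpr ⟨Finset.mem_powerset.mpr hQE, hQ, hPQ⟩)
  obtain ⟨hRE, hR, hPR⟩ := Finset.mem_filter.mp hmax.prop
  have hRE : R ⊂ E := (Finset.mem_powerset.mp hRE).ssubset_of_ne (by rintro rfl; exact hPE hPR)
  obtain ⟨a, haE, haR, haR𝒞⟩ := hconv.2.2 R hR E hE hRE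
  refine ⟨R, hR, hQR, a, haR, haR𝒞, hPR, fun hPa => haR ?_⟩
  have hle := hmax.2 (Finset.mem_filter.mpr
    ⟨Finset.mem_powerset.mpr (Finset.insert_subset haE hRE.subset), haR𝒞, hPa⟩)
    (Finset.subset_insert a R)
  exact hle (Finset.mem_insert_self a R)

end IsConvexoid

namespace Midpointed

variable {G : Type*} [Group G] {𝒞 : Set (Finset G)} {C : Finset G}

theorem mem_of_mul_mem (hmid : Midpointed 𝒞) (hC : C ∈ 𝒞) {a b : G} (h₁ : a * b ∈ C)
    (h₂ : a * b⁻¹ ∈ C) : a ∈ C :=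
  hmid a b C hC (Finset.insert_subset h₁ (Finset.singleton_subset_iff.mpr h₂))

theorem pow_add_mem (hmid : Midpointed 𝒞) (hC : C ∈ 𝒞) {h : G} {i e : ℕ} (hi : h ^ i ∈ C)
    (he : h ^ (i + 2 * e) ∈ C) : h ^ (i + e) ∈ C := by
  refine hmid.mem_of_mul_mem hC (b := h ^ e) ?_ ?_
  · rwa [← pow_add, add_assoc, ← two_mul]
  · rwa [pow_add, mul_inv_cancel_right]

theorem eq_one_of_isOfFinOrder (hmid : Midpointed 𝒞) (hconv : IsConvexoid 𝒞) {g : G}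
    (hg : IsOfFinOrder g) : g = 1 := by
  by_contra hg1
  set F := hg.finite_zpowers.toFinset
  have hF : ∀ {x}, x ∈ F ↔ x ∈ Subgroup.zpowers g := Set.Finite.mem_toFinset _
  obtain ⟨E, hE, hFE⟩ := hconv.2.1 F
  obtain ⟨R, hR, -, a, haR, -, hFR, hFaR⟩ := hconv.exists_insert_mem_flip hconv.1 hE
    (Finset.empty_subset E) (fun R => ¬ F ⊆ R) (fun h => by simpa using h (hF.mpr
      (Subgroup.one_mem _))) (not_not.mpr hFE)
  rw [not_not] at hFaR
  have haF : a ∈ F := by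
    by_contra haF
    exact hFR ((Finset.subset_insert_iff_of_notMem haF).mp hFaR)
  have mem_R : ∀ {b}, b ∈ Subgroup.zpowers g → a * b ≠ a → a * b ∈ R := fun hb hne =>
    (Finset.mem_insert.mp (hFaR (hF.mpr (Subgroup.mul_mem _ (hF.mp haF) hb)))).resolve_left hne
  refine haR (hmid.mem_of_mul_mem hR (mem_R (Subgroup.mem_zpowers g) ?_)
    (mem_R (Subgroup.inv_mem _ (Subgroup.mem_zpowers g)) ?_))
  · simpa using hg1
  · simpa using hg1

variable {h : G} (hh : Function.Injective (h ^ · : ℕ → G))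
include hh

/-- For an odd gap, the first power strictly between `h ^ a` and `h ^ b` to enter a
corner-addition chain starting at `C` makes an even gap with `h ^ a` or `h ^ b`; the midpoint of
that gap is also strictly between, yet it would have to be present already. -/
theorem exists_pow_mem_Ioo (hmid : Midpointed 𝒞) (hconv : IsConvexoid 𝒞) (hC : C ∈ 𝒞)
    {a b : ℕ} (hab : a + 1 < b) (ha : h ^ a ∈ C) (hb : h ^ b ∈ C) :
    ∃ j ∈ Set.Ioo a b, h ^ j ∈ C := by
  by_contra! hout
  rcases Nat.even_or_odd (b - a) with ⟨e, he⟩ | hodd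
  · exact hout (a + e) ⟨by omega, by omega⟩ (hmid.pow_add_mem hC ha (by convert hb using 2; omega))
  set F := (Finset.Ioo a b).image (h ^ ·)
  obtain ⟨E, hE, hCFE⟩ := hconv.2.1 (C ∪ F)
  have hFE : F ⊆ E := Finset.union_subset_right hCFE
  obtain ⟨R, hR, hCR, x, hxR, hxR𝒞, hFR, hFxR⟩ := hconv.exists_insert_mem_flip hC hE
    (Finset.union_subset_left hCFE) (fun R => Disjoint F R)
    (Finset.disjoint_left.mpr fun y hy hyC => by
      obtain ⟨j, hj, rfl⟩ := Finset.mem_image.mp hy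
      exact hout j (Finset.mem_Ioo.mp hj) hyC)
    (fun hFE' => by
      have hy : h ^ (a + 1) ∈ F := Finset.mem_image_of_mem _ (Finset.mem_Ioo.mpr ⟨by omega, hab⟩)
      exact Finset.disjoint_left.mp hFE' hy (hFE hy))
  obtain ⟨j, hj, rfl⟩ : ∃ j ∈ Finset.Ioo a b, h ^ j = x := by
    by_contra! hxF
    exact hFxR (Finset.disjoint_insert_right.mpr ⟨fun hx => by
      obtain ⟨j, hj, hjx⟩ := Finset.mem_image.mp hx; exact hxF j hj hjx, hFR⟩)
  rw [Finset.mem_Ioo] at hj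
  have mid_eq : ∀ p e, a ≤ p → p + 2 * e ≤ b → 0 < e → h ^ p ∈ insert (h ^ j) R →
      h ^ (p + 2 * e) ∈ insert (h ^ j) R → p + e = j := by
    intro p e hap hpb he hp hpe
    rcases Finset.mem_insert.mp (hmid.pow_add_mem hxR𝒞 hp hpe) with heq | hmem
    · exact hh heq
    · exact (Finset.disjoint_left.mp hFR (Finset.mem_image_of_mem _
        (Finset.mem_Ioo.mpr ⟨by omega, by omega⟩)) hmem).elim
  have haR : h ^ a ∈ insert (h ^ j) R := Finset.mem_insert_of_mem (hCR ha)
  have hbR : h ^ b ∈ insert (h ^ j) R := Finset.mem_insert_of_mem (hCR hb)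
  have hjR := Finset.mem_insert_self (h ^ j) R
  rcases Nat.even_or_odd (j - a) with ⟨e, he⟩ | hodd'
  · have := mid_eq a e le_rfl (by omega) (by omega) haR (by convert hjR using 2; omega)
    omega
  · obtain ⟨e, he⟩ : Even (b - j) := by
      rw [Nat.even_iff]; rw [Nat.odd_iff] at hodd hodd'; omega
    have := mid_eq j e (by omega) (by omega) (by omega) hjR (by convert hbR using 2; omega)
    omega

theorem pow_mem_of_mem_Icc (hmid : Midpointed 𝒞) (hconv : IsConvexoid 𝒞) (hC : C ∈ 𝒞)
    {a b : ℕ} (ha : h ^ a ∈ C) (hb : h ^ b ∈ C) {j : ℕ} (hj : j ∈ Set.Icc a b) : h ^ j ∈ C := by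
  induction hd : b - a using Nat.strong_induction_on generalizing a b with
  | _ d ih =>
    by_cases hab : a + 1 < b
    · obtain ⟨k, hk, hkC⟩ := hmid.exists_pow_mem_Ioo hh hconv hC hab ha hb
      rcases le_total j k with hjk | hkj
      · exact ih (k - a) (by grind) ha hkC ⟨hj.1, hjk⟩ rfl
      · exact ih (b - k) (by grind) hkC hb ⟨hkj, hj.2⟩ rfl
    · obtain rfl | rfl : j = a ∨ j = b := by grind
      exacts [ha, hb]

end Midpointed

theorem not_exists_midpointed_convexoid_of_infinite_roots {G : Type*} [Group G] {g : G}
    (hg : g ≠ 1) (hroots : {n : ℕ | ∃ h : G, h ^ n = g}.Infinite) :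
    ¬ ∃ 𝒞 : Set (Finset G), IsConvexoid 𝒞 ∧ Midpointed 𝒞 := by
  rintro ⟨𝒞, hconv, hmid⟩
  obtain ⟨Q, hQ, hgQ⟩ := hconv.2.1 {1, g}
  obtain ⟨n, ⟨h, rfl⟩, hn⟩ := hroots.exists_gt Q.card
  have hh : Function.Injective (h ^ · : ℕ → G) := injective_pow_iff_not_isOfFinOrder.mpr
    fun hfin => hg (hmid.eq_one_of_isOfFinOrder hconv hfin.pow)
  have hsub : (Finset.range (n + 1)).image (h ^ ·) ⊆ Q := by
    intro x hx
    obtain ⟨j, hj, rfl⟩ := Finset.mem_image.mp hx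
    exact hmid.pow_mem_of_mem_Icc hh hconv hQ (a := 0) (by simpa using hgQ (by simp))
      (hgQ (by simp)) ⟨Nat.zero_le j, Nat.lt_succ_iff.mp (Finset.mem_range.mp hj)⟩
  have := Finset.card_le_card hsub
  rw [Finset.card_image_of_injective _ hh, Finset.card_range] at this
  omega

theorem infinite_roots_ofAdd_one_rat :
    {n : ℕ | ∃ h : Multiplicative ℚ, h ^ n = Multiplicative.ofAdd 1}.Infinite := by
  refine (Set.Ici_infinite 1).mono fun n (hn : 1 ≤ n) => ⟨Multiplicative.ofAdd (n : ℚ)⁻¹, ?_⟩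
  rw [← ofAdd_nsmul, nsmul_eq_mul, mul_inv_cancel₀ (by positivity)]

theorem one_mem_zInv (n : ℕ) : (1 : ℚ) ∈ zInv n :=
  AddSubgroup.subset_closure ⟨0, by simp⟩

theorem infinite_roots_ofAdd_one_zInv {n : ℕ} (hn : 2 ≤ n) :
    {m : ℕ | ∃ h : Multiplicative (zInv n),
      h ^ m = Multiplicative.ofAdd ⟨1, one_mem_zInv n⟩}.Infinite := by
  refine (Set.infinite_range_of_injective (Nat.pow_right_injective hn)).mono ?_
  rintro _ ⟨k, rfl⟩
  refine ⟨Multiplicative.ofAdd ⟨1 / (n : ℚ) ^ k, AddSubgroup.subset_closure ⟨k, rfl⟩⟩, ?_⟩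
  rw [← ofAdd_nsmul]
  congr 1
  ext
  simp [nsmul_eq_mul, show (n : ℚ) ≠ 0 by positivity]

/-- A group in which some `g ≠ 1` has infinitely many roots admits no midpointed
convexoid; in particular `ℚ` and `ℤ[1/n]` (`n ≥ 2`) admit no midpointed convexoid
(a fortiori, no midpointed convex geometry). -/
theorem stmt17 :
    (∀ (G : Type) (_ : Group G) (g : G), g ≠ 1 →
        {n : ℕ | ∃ h : G, h ^ n = g}.Infinite →
        ¬ ∃ 𝒞 : Set (Finset G), IsConvexoid 𝒞 ∧ Midpointed 𝒞) ∧
      (¬ ∃ 𝒞 : Set (Finset (Multiplicative ℚ)), IsConvexoid 𝒞 ∧ Midpointed 𝒞) ∧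
      (∀ n : ℕ, 2 ≤ n →
        ¬ ∃ 𝒞 : Set (Finset (Multiplicative (zInv n))), IsConvexoid 𝒞 ∧ Midpointed 𝒞) := by
  refine ⟨fun G _ g hg hroots => not_exists_midpointed_convexoid_of_infinite_roots hg hroots,
    not_exists_midpointed_convexoid_of_infinite_roots (by simp) infinite_roots_ofAdd_one_rat,
    fun n hn => not_exists_midpointed_convexoid_of_infinite_roots ?_
      (infinite_roots_ofAdd_one_zInv hn)⟩
  rw [Ne, ← ofAdd_zero, EmbeddingLike.apply_eq_iff_eq, ← Subtype.coe_inj]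
  simp
end
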